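/- arXiv:2112.14488 — 5 statements merged into one kernel-verified Lean document; each statement's English description precedes it below -/
import Mathlib

section
/- The number of balanced partitions of a necklace of ktm beads into k parts achievable by at most s cuts is at most k^{s+1} (tm)^{s+1-k}. -/
/-!
A partition with `r ≤ s` cuts consists of `r + 1` runs and is determined by the colours and the
lengths of its runs. The colour sequence, padded to length `s + 1` by repeating its last entry,
takes at most `k^(s+1)` values, and the padding is recognisable because adjacent runs differ in
colour. Every run has length between `1` and `tm`, and by balance the length of the last run of
each colour is forced by the others; since all `k` colours occur, only the lengths of at most
`r + 1 - k ≤ s + 1 - k` runs remain free.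
-/

open scoped Classical

noncomputable section

/-- The number of cuts needed to realize the partition `P` of the positions of an open
necklace: the number of adjacent pairs of positions assigned to different parts. -/
def cutsOf {n k : ℕ} (P : Fin n → Fin k) : ℕ :=
  (Finset.univ.filter (fun p : Fin n × Fin n =>
    (p.1 : ℕ) + 1 = (p.2 : ℕ) ∧ P p.1 ≠ P p.2)).card

open Finset

section Recurring

variable {β : Type*}

def recurringIndices (r : ℕ) (o : ℕ → β) : Finset ℕ :=
  {j ∈ range (r + 1) | ∃ j' ∈ Ioc j r, o j' = o j}

lemma recurringIndices_congr {r : ℕ} {o o' : ℕ → β} (h : ∀ j ≤ r, o j = o' j) :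
    recurringIndices r o = recurringIndices r o' := by
  refine filter_congr fun j hj => exists_congr fun j' => and_congr_right fun hj' => ?_
  rw [mem_range] at hj
  rw [mem_Ioc] at hj'
  rw [h j' hj'.2, h j (by omega)]

lemma card_recurringIndices_add_le [Fintype β] {r : ℕ} {o : ℕ → β}
    (ho : ∀ c, ∃ j ≤ r, o j = c) : #(recurringIndices r o) + Fintype.card β ≤ r + 1 := by
  have hsurj : Set.SurjOn o ↑(range (r + 1) \ recurringIndices r o) ↑(univ : Finset β) := by
    intro c _
    have hne : ({j ∈ range (r + 1) | o j = c}).Nonempty := by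
      obtain ⟨j, hj, hjc⟩ := ho c
      exact ⟨j, mem_filter.2 ⟨mem_range.2 (by omega), hjc⟩⟩
    -- the last occurrence of `c` does not recur
    have hm := mem_filter.1 (max'_mem _ hne)
    refine ⟨_, mem_sdiff.2 ⟨hm.1, fun hrec => ?_⟩, hm.2⟩
    obtain ⟨j', hj', hj'c⟩ := (mem_filter.1 hrec).2
    rw [mem_Ioc] at hj'
    have := le_max' {j ∈ range (r + 1) | o j = c} j'
      (mem_filter.2 ⟨mem_range.2 (by omega), hj'c.trans hm.2⟩)
    omega
  have hsub : recurringIndices r o ⊆ range (r + 1) := filter_subset _ _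
  have := card_le_card_of_surjOn o hsurj
  rw [card_univ, card_sdiff_of_subset hsub, card_range] at this
  have := card_le_card hsub
  rw [card_range] at this
  omega

/-- A quantity summed over each colour class is determined by its values at the indices that
recur, since each colour class has exactly one index that does not. -/
lemma eq_of_sum_eq_of_eqOn_recurringIndices {M : Type*} [AddCancelCommMonoid M] {r : ℕ}
    {o : ℕ → β} {f g : ℕ → M}
    (hsum : ∀ c, ∑ j ∈ range (r + 1) with o j = c, f j = ∑ j ∈ range (r + 1) with o j = c, g j)
    (hrec : ∀ j ∈ recurringIndices r o, f j = g j) {j : ℕ} (hj : j ≤ r) : f j = g j := by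
  by_cases hjrec : j ∈ recurringIndices r o
  · exact hrec j hjrec
  have hjS : j ∈ {i ∈ range (r + 1) | o i = o j} := mem_filter.2 ⟨mem_range.2 (by omega), rfl⟩
  have hrest : ∑ i ∈ {i ∈ range (r + 1) | o i = o j}.erase j, f i =
      ∑ i ∈ {i ∈ range (r + 1) | o i = o j}.erase j, g i := by
    refine sum_congr rfl fun i hi => hrec i ?_
    obtain ⟨hij, hiS⟩ := mem_erase.1 hi
    obtain ⟨hi, hic⟩ := mem_filter.1 hiS
    rcases lt_or_gt_of_ne hij with hlt | hgt
    · exact mem_filter.2 ⟨hi, j, mem_Ioc.2 ⟨hlt, hj⟩, hic.symm⟩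
    · exact absurd (mem_filter.2 ⟨mem_range.2 (by omega), i,
        mem_Ioc.2 ⟨hgt, Nat.lt_succ_iff.1 (mem_range.1 hi)⟩, hic⟩) hjrec
  have := hsum (o j)
  rw [← add_sum_erase _ _ hjS, ← add_sum_erase _ _ hjS, hrest] at this
  exact add_right_cancel this

end Recurring

namespace Necklace

variable {α : Type*} {n : ℕ}

def cuts (P : Fin n → α) : Finset ℕ :=
  ({p : Fin n × Fin n | (p.1 : ℕ) + 1 = p.2 ∧ P p.1 ≠ P p.2} : Finset _).image fun p => (p.1 : ℕ)

lemma mem_cuts {P : Fin n → α} {i : ℕ} :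
    i ∈ cuts P ↔ ∃ x y : Fin n, (x : ℕ) = i ∧ (y : ℕ) = i + 1 ∧ P x ≠ P y := by
  simp only [cuts, mem_image, mem_filter, mem_univ, true_and, Prod.exists]
  constructor
  · rintro ⟨x, y, ⟨hxy, hne⟩, rfl⟩
    exact ⟨x, y, rfl, hxy.symm, hne⟩
  · rintro ⟨x, y, rfl, hy, hne⟩
    exact ⟨x, y, ⟨hy.symm, hne⟩, rfl⟩

lemma card_cuts {k : ℕ} (P : Fin n → Fin k) : #(cuts P) = cutsOf P := by
  unfold cuts cutsOf
  rw [card_image_of_injOn]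
  · congr
  intro p hp q hq hpq
  simp only [coe_filter, mem_univ, true_and, Set.mem_ofPred_eq] at hp hq hpq
  exact Prod.ext (Fin.ext hpq) (Fin.ext (by rw [← hp.1, ← hq.1, hpq]))

lemma succ_lt_of_mem_cuts {P : Fin n → α} {i : ℕ} (hi : i ∈ cuts P) : i + 1 < n := by
  obtain ⟨-, y, -, hy, -⟩ := mem_cuts.1 hi
  exact hy ▸ y.isLt

def balancedPartitions [Fintype α] (n a s : ℕ) : Finset (Fin n → α) :=
  {P | (∀ c, #{x | P x = c} = a) ∧ #(cuts P) ≤ s}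

lemma mem_balancedPartitions [Fintype α] {P : Fin n → α} {a s : ℕ} :
    P ∈ balancedPartitions n a s ↔ (∀ c, #{x | P x = c} = a) ∧ #(cuts P) ≤ s := by
  simp [balancedPartitions]

def runIdx (P : Fin n → α) (x : ℕ) : ℕ :=
  #(cuts P ∩ range x)

variable (P : Fin n → α)

lemma runIdx_zero : runIdx P 0 = 0 := by
  simp [runIdx]

lemma runIdx_succ (x : ℕ) : runIdx P (x + 1) = runIdx P x + if x ∈ cuts P then 1 else 0 := by
  unfold runIdx
  rw [range_add_one]
  split_ifs with hx
  · rw [inter_insert_of_mem hx, card_insert_of_notMem (by simp)]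
  · rw [inter_insert_of_notMem hx, add_zero]

lemma runIdx_mono : Monotone (runIdx P) :=
  fun _ _ h => card_le_card (inter_subset_inter_left (range_subset_range.2 h))

lemma runIdx_le_card (x : ℕ) : runIdx P x ≤ #(cuts P) :=
  card_le_card inter_subset_left

lemma runIdx_eq_card {x : ℕ} (hx : n ≤ x + 1) : runIdx P x = #(cuts P) := by
  rw [runIdx, inter_eq_left.2 fun i hi => mem_range.2 (by have := succ_lt_of_mem_cuts hi; omega)]

lemma apply_eq_of_runIdx_eq_of_le {x y : Fin n} (hxy : x ≤ y)
    (h : runIdx P x = runIdx P y) : P x = P y := by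
  obtain ⟨y, hy⟩ := y
  rw [Fin.le_def] at hxy
  induction y with
  | zero => exact congrArg P (Fin.ext (by simp only at hxy ⊢; omega))
  | succ y ih =>
    rcases hxy.eq_or_lt with hxy | hxy
    · exact congrArg P (Fin.ext hxy)
    have hxy' : (x : ℕ) ≤ y := Nat.le_of_lt_succ hxy
    have hle := runIdx_mono P hxy'
    have hsucc := runIdx_succ P y
    simp only at h
    have hnot : y ∉ cuts P := fun hmem => by rw [if_pos hmem] at hsucc; omega
    rw [if_neg hnot] at hsucc
    rw [ih (by omega) hxy' (show runIdx P x = runIdx P y by omega)]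
    by_contra hne
    exact hnot (mem_cuts.2 ⟨_, _, rfl, rfl, hne⟩)

lemma apply_eq_of_runIdx_eq {x y : Fin n} (h : runIdx P x = runIdx P y) : P x = P y := by
  rcases le_total x y with hxy | hyx
  · exact apply_eq_of_runIdx_eq_of_le P hxy h
  · exact (apply_eq_of_runIdx_eq_of_le P hyx h.symm).symm

/-- Every run but the last one ends at a cut. -/
lemma exists_mem_cuts_runIdx_eq {j : ℕ} (hj : j < #(cuts P)) :
    ∃ i ∈ cuts P, runIdx P i = j := by
  have hex : ∃ x, j < runIdx P x := ⟨n, by rwa [runIdx_eq_card P (by omega)]⟩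
  obtain ⟨i, hi⟩ : ∃ i, Nat.find hex = i + 1 :=
    Nat.exists_eq_succ_of_ne_zero fun h0 => by simpa [h0, runIdx_zero] using Nat.find_spec hex
  have hlt : j < runIdx P (i + 1) := hi ▸ Nat.find_spec hex
  have hle : runIdx P i ≤ j := not_lt.1 (Nat.find_min hex (by omega))
  have hsucc := runIdx_succ P i
  split_ifs at hsucc with hmem
  · exact ⟨i, hmem, by omega⟩
  · omega

lemma exists_runIdx_eq (hn : 0 < n) {j : ℕ} (hj : j ≤ #(cuts P)) :
    ∃ x : Fin n, runIdx P x = j := by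
  rcases hj.lt_or_eq with hj | rfl
  · obtain ⟨i, hi, rfl⟩ := exists_mem_cuts_runIdx_eq P hj
    exact ⟨⟨i, by have := succ_lt_of_mem_cuts hi; omega⟩, rfl⟩
  · exact ⟨⟨n - 1, by omega⟩, runIdx_eq_card P (by simp; omega)⟩

def runLength (j : ℕ) : ℕ :=
  #{x : Fin n | runIdx P x = j}

lemma runLength_pos (hn : 0 < n) {j : ℕ} (hj : j ≤ #(cuts P)) : 0 < runLength P j := by
  obtain ⟨x, hx⟩ := exists_runIdx_eq P hn hj
  exact card_pos.2 ⟨x, by simp [hx]⟩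

lemma runLength_eq_zero {j : ℕ} (hj : #(cuts P) < j) : runLength P j = 0 := by
  rw [runLength, card_eq_zero, filter_eq_empty_iff]
  intro x _
  have := runIdx_le_card P x
  omega

lemma sum_range_runLength (j : ℕ) :
    ∑ i ∈ range j, runLength P i = #{x : Fin n | runIdx P x < j} := by
  rw [card_eq_sum_card_fiberwise (f := fun x : Fin n => runIdx P x) (t := range j)
    fun x hx => by simpa using hx]
  refine sum_congr rfl fun i hi => congrArg card ?_
  ext x
  simp only [mem_filter, mem_univ, true_and, iff_and_self]
  exact fun hx => hx ▸ mem_range.1 hi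

/-- Runs are consecutive blocks, so the run index of `x` is read off from the partial sums
of run lengths. -/
lemma runIdx_lt_iff (x : Fin n) (j : ℕ) :
    runIdx P x < j ↔ (x : ℕ) < ∑ i ∈ range j, runLength P i := by
  rw [sum_range_runLength]
  constructor
  · intro hx
    calc (x : ℕ) < #(Iic x) := by rw [Fin.card_Iic]; omega
      _ ≤ _ := card_le_card fun y hy => by
        simpa using (runIdx_mono P (Fin.le_def.1 (mem_Iic.1 hy))).trans_lt hx
  · intro hx
    by_contra! hjx
    have : #{y : Fin n | runIdx P y < j} ≤ #(Iio x) := card_le_card fun y hy => by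
      simp only [mem_filter, mem_univ, true_and] at hy
      exact mem_Iio.2 (lt_of_not_ge fun hxy => by
        have := runIdx_mono P (Fin.le_def.1 hxy); omega)
    rw [Fin.card_Iio] at this
    omega

lemma runIdx_eq_of_runLength_eq {P Q : Fin n → α} (h : ∀ j, runLength P j = runLength Q j)
    (x : Fin n) : runIdx P x = runIdx Q x :=
  eq_of_forall_gt_iff fun j => by simp only [runIdx_lt_iff, h]

variable [Nonempty α]

/-- The colour of run `j`; a junk value when `j` exceeds the number of cuts. -/
def runColor (j : ℕ) : α :=
  Classical.epsilon fun c => ∃ x : Fin n, runIdx P x = j ∧ P x = c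

lemma runColor_runIdx (x : Fin n) : runColor P (runIdx P x) = P x := by
  obtain ⟨y, hy, hyc⟩ :=
    Classical.epsilon_spec (p := fun c => ∃ y : Fin n, runIdx P y = runIdx P x ∧ P y = c)
      ⟨P x, x, rfl, rfl⟩
  rw [runColor, ← hyc]
  exact apply_eq_of_runIdx_eq P hy

lemma runColor_succ_ne {j : ℕ} (hj : j < #(cuts P)) : runColor P (j + 1) ≠ runColor P j := by
  obtain ⟨i, hi, rfl⟩ := exists_mem_cuts_runIdx_eq P hj
  obtain ⟨x, y, rfl, hy, hne⟩ := mem_cuts.1 hi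
  have hsucc : runIdx P y = runIdx P x + 1 := by rw [hy, runIdx_succ, if_pos hi]
  rw [← hsucc, runColor_runIdx, runColor_runIdx]
  exact hne.symm

lemma card_eq_sum_runLength (c : α) :
    #{x : Fin n | P x = c} = ∑ j ∈ range (#(cuts P) + 1) with runColor P j = c, runLength P j := by
  rw [card_eq_sum_card_fiberwise (f := fun x : Fin n => runIdx P x)]
  · refine sum_congr rfl fun j hj => congrArg card ?_
    ext x
    simp only [mem_filter, mem_univ, true_and, and_iff_right_iff_imp]
    intro hx
    rw [← runColor_runIdx P x, hx]
    exact (mem_filter.1 hj).2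
  · intro x hx
    simp only [coe_filter, mem_univ, true_and, Set.mem_ofPred_eq, mem_range] at hx ⊢
    exact ⟨Nat.lt_succ_of_le (runIdx_le_card P x), by rw [runColor_runIdx, hx]⟩

lemma runLength_le_card {j : ℕ} (hj : j ≤ #(cuts P)) :
    runLength P j ≤ #{x : Fin n | P x = runColor P j} := by
  rw [card_eq_sum_runLength]
  exact single_le_sum (f := runLength P) (fun _ _ => Nat.zero_le _)
    (mem_filter.2 ⟨mem_range.2 (by omega), rfl⟩)

variable {P}

/-- The run colours padded to length `s + 1` by repeating the last one, so that the number of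
cuts can be read off: adjacent runs have different colours. -/
def colorSeq (P : Fin n → α) (s : ℕ) : Fin (s + 1) → α :=
  fun i => runColor P (min i #(cuts P))

lemma not_card_cuts_lt_of_colorSeq_eq {Q : Fin n → α} {s : ℕ} (hQ : #(cuts Q) ≤ s)
    (h : colorSeq P s = colorSeq Q s) : ¬ #(cuts P) < #(cuts Q) := by
  intro hlt
  have h₀ := congrFun h ⟨#(cuts P), by omega⟩
  have h₁ := congrFun h ⟨#(cuts P) + 1, by omega⟩
  simp only [colorSeq] at h₀ h₁
  rw [min_self, min_eq_left hlt.le] at h₀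
  rw [min_eq_right (Nat.le_succ _), min_eq_left hlt] at h₁
  exact runColor_succ_ne Q hlt (h₁.symm.trans h₀)

lemma card_cuts_eq_of_colorSeq_eq {Q : Fin n → α} {s : ℕ} (hP : #(cuts P) ≤ s)
    (hQ : #(cuts Q) ≤ s) (h : colorSeq P s = colorSeq Q s) : #(cuts P) = #(cuts Q) :=
  le_antisymm (not_lt.1 (not_card_cuts_lt_of_colorSeq_eq hP h.symm))
    (not_lt.1 (not_card_cuts_lt_of_colorSeq_eq hQ h))

lemma runColor_eq_of_colorSeq_eq {Q : Fin n → α} {s : ℕ} (hP : #(cuts P) ≤ s)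
    (hr : #(cuts P) = #(cuts Q)) (h : colorSeq P s = colorSeq Q s) {j : ℕ}
    (hj : j ≤ #(cuts P)) : runColor P j = runColor Q j := by
  simpa [colorSeq, min_eq_left hj, min_eq_left (hr ▸ hj)] using congrFun h ⟨j, by omega⟩

theorem eq_of_runColor_eq_of_runLength_eq {Q : Fin n → α} (hr : #(cuts P) = #(cuts Q))
    (hcolor : ∀ j ≤ #(cuts P), runColor P j = runColor Q j)
    (hcount : ∀ c, #{x | P x = c} = #{x | Q x = c})
    (hlen : ∀ j ∈ recurringIndices #(cuts P) (runColor P), runLength P j = runLength Q j) :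
    P = Q := by
  have hlen_all : ∀ j, runLength P j = runLength Q j := by
    intro j
    rcases le_or_gt j #(cuts P) with hj | hj
    · refine eq_of_sum_eq_of_eqOn_recurringIndices (fun c => ?_) hlen hj
      rw [← card_eq_sum_runLength, hcount, card_eq_sum_runLength, ← hr]
      refine sum_congr (filter_congr fun i hi => ?_) fun _ _ => rfl
      rw [hcolor i (Nat.lt_succ_iff.1 (mem_range.1 hi))]
    · rw [runLength_eq_zero P hj, runLength_eq_zero Q (hr ▸ hj)]
  funext x
  rw [← runColor_runIdx P x, ← runColor_runIdx Q x, ← runIdx_eq_of_runLength_eq hlen_all x]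
  exact hcolor _ (runIdx_le_card P x)

lemma exists_runColor_eq {a : ℕ} (ha : 0 < a) (hP : ∀ c, #{x | P x = c} = a) (c : α) :
    ∃ j ≤ #(cuts P), runColor P j = c := by
  obtain ⟨x, hx⟩ := card_pos.1 ((hP c).symm ▸ ha : 0 < #{x | P x = c})
  exact ⟨runIdx P x, runIdx_le_card P x, by rw [runColor_runIdx]; simpa using hx⟩

lemma runLength_mem_Icc {a : ℕ} (ha : 0 < a) (hP : ∀ c, #{x | P x = c} = a) {j : ℕ}
    (hj : j ≤ #(cuts P)) : runLength P j ∈ Icc 1 a := by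
  obtain ⟨c⟩ := ‹Nonempty α›
  obtain ⟨x, -⟩ := card_pos.1 ((hP c).symm ▸ ha : 0 < #{x | P x = c})
  exact mem_Icc.2 ⟨runLength_pos P x.pos hj, hP _ ▸ runLength_le_card P hj⟩

lemma recurringIndices_eq_of_colorSeq_eq {Q : Fin n → α} {s : ℕ} (hP : #(cuts P) ≤ s)
    (hQ : #(cuts Q) ≤ s) (h : colorSeq P s = colorSeq Q s) :
    recurringIndices #(cuts P) (runColor P) = recurringIndices #(cuts Q) (runColor Q) := by
  have hr := card_cuts_eq_of_colorSeq_eq hP hQ h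
  rw [← hr]
  exact recurringIndices_congr fun j hj => runColor_eq_of_colorSeq_eq hP hr h hj

variable [Fintype α]

lemma eq_of_colorSeq_eq_of_runLength_eq {Q : Fin n → α} {a s : ℕ}
    (hP : P ∈ balancedPartitions n a s) (hQ : Q ∈ balancedPartitions n a s)
    (h : colorSeq P s = colorSeq Q s)
    (hlen : ∀ j ∈ recurringIndices #(cuts P) (runColor P), runLength P j = runLength Q j) :
    P = Q := by
  obtain ⟨hbalP, hcutsP⟩ := mem_balancedPartitions.1 hP
  obtain ⟨hbalQ, hcutsQ⟩ := mem_balancedPartitions.1 hQ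
  have hr := card_cuts_eq_of_colorSeq_eq hcutsP hcutsQ h
  exact eq_of_runColor_eq_of_runLength_eq hr
    (fun j hj => runColor_eq_of_colorSeq_eq hcutsP hr h hj)
    (fun c => (hbalP c).trans (hbalQ c).symm) hlen

/-- Within a fibre of `colorSeq`, a partition is determined by the lengths of its recurring
runs, each between `1` and `a`. -/
lemma card_fiber_colorSeq_le {a s : ℕ} (ha : 0 < a) {P₀ : Fin n → α}
    (hP₀ : P₀ ∈ balancedPartitions n a s) :
    #{P ∈ balancedPartitions n a s | colorSeq P s = colorSeq P₀ s} ≤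
      a ^ (s + 1 - Fintype.card α) := by
  obtain ⟨hbal₀, hcuts₀⟩ := mem_balancedPartitions.1 hP₀
  have hN : #(recurringIndices #(cuts P₀) (runColor P₀)) ≤ s + 1 - Fintype.card α := by
    have := card_recurringIndices_add_le (exists_runColor_eq ha hbal₀)
    omega
  set N := recurringIndices #(cuts P₀) (runColor P₀)
  have hfiber : ∀ P ∈ ({P ∈ balancedPartitions n a s | colorSeq P s = colorSeq P₀ s} :
      Finset (Fin n → α)), recurringIndices #(cuts P) (runColor P) = N := fun P hP =>
    recurringIndices_eq_of_colorSeq_eq (mem_balancedPartitions.1 (mem_filter.1 hP).1).2 hcuts₀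
      (mem_filter.1 hP).2
  calc _ ≤ #(Fintype.piFinset fun _ : N => Icc 1 a) := by
        refine card_le_card_of_injOn (fun P j => runLength P j) (fun P hP => ?_) ?_
        · rw [mem_coe, Fintype.mem_piFinset]
          intro ⟨j, hj⟩
          rw [← hfiber P hP] at hj
          have hbal := (mem_balancedPartitions.1 (mem_filter.1 hP).1).1
          exact runLength_mem_Icc ha hbal (Nat.lt_succ_iff.1 (mem_range.1 (mem_filter.1 hj).1))
        · intro P hP Q hQ hPQ
          refine eq_of_colorSeq_eq_of_runLength_eq (mem_filter.1 hP).1 (mem_filter.1 hQ).1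
            ((mem_filter.1 hP).2.trans (mem_filter.1 hQ).2.symm) fun j hj => ?_
          rw [hfiber P hP] at hj
          exact congrFun hPQ ⟨j, hj⟩
    _ = a ^ #N := by simp [Fintype.card_piFinset]
    _ ≤ a ^ (s + 1 - Fintype.card α) := Nat.pow_le_pow_right ha hN

theorem card_balancedPartitions_le {a : ℕ} (ha : 0 < a) (s : ℕ) :
    #(balancedPartitions (α := α) n a s) ≤
      Fintype.card α ^ (s + 1) * a ^ (s + 1 - Fintype.card α) :=
  calc _ ≤ a ^ (s + 1 - Fintype.card α) * #((balancedPartitions n a s).image (colorSeq · s)) :=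
        card_le_mul_card_image _ _ fun o ho => by
          obtain ⟨P₀, hP₀, rfl⟩ := mem_image.1 ho
          exact card_fiber_colorSeq_le ha hP₀
    _ ≤ a ^ (s + 1 - Fintype.card α) * Fintype.card (Fin (s + 1) → α) :=
        Nat.mul_le_mul_left _ (card_le_univ _)
    _ = _ := by rw [Fintype.card_fun, Fintype.card_fin, mul_comm]

end Necklace

theorem stmt6_general (k t m s : ℕ) (hk : 0 < k) (ht : 0 < t) (hm : 0 < m) :
    (Finset.univ.filter (fun P : Fin (k * t * m) → Fin k =>
        (∀ j : Fin k, (Finset.univ.filter (fun p => P p = j)).card = t * m) ∧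
        cutsOf P ≤ s)).card
      ≤ k ^ (s + 1) * (t * m) ^ (s + 1 - k) := by
  have : Nonempty (Fin k) := Fin.pos_iff_nonempty.1 hk
  have h := Necklace.card_balancedPartitions_le (α := Fin k) (n := k * t * m)
    (Nat.mul_pos ht hm) s
  simp only [Necklace.balancedPartitions, Necklace.card_cuts, Fintype.card_fin] at h
  convert h using 3
  congr!

/-- The number of balanced partitions (each of the `k` parts receiving exactly `t*m` of
the `k*t*m` positions) achievable by at most `s` cuts is at most
`k^(s+1) * (t*m)^(s+1-k)`. -/
theorem stmt6 (k t m s : ℕ) (hk : 0 < k) (ht : 0 < t) (hm : 0 < m) (hs : k ≤ s + 1) :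
    (Finset.univ.filter (fun P : Fin (k * t * m) → Fin k =>
        (∀ j : Fin k, (Finset.univ.filter (fun p => P p = j)).card = t * m) ∧
        cutsOf P ≤ s)).card
      ≤ k ^ (s + 1) * (t * m) ^ (s + 1 - k) :=
  stmt6_general k t m s hk ht hm

end
end

section
/- There is an absolute constant c > 0 such that: if X is a uniform random x-subset of an interval Y of y points, then the probability that there exists a subinterval Z of Y with ||X ∩ Z| - |Z|·x/y| ≥ U is at most 8·exp(-c U²/x). -/
/-!
Write `S_k = #(X ∩ [0, k))` and `D_k = S_k - k x / y`. The deviation on an interval `[a, b]` is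
`D_{b+1} - D_a`, so it is enough to bound the probability that `|D_k| ≥ U / 2` for some `k`,
and reversing `Y` (which sends `D_k` to `-D_{y-k}`) reduces this to `k ≤ y / 2`.

Reveal the points of `Y` one by one. Given `S_j = s`, the next point lies in `X` with
probability `p = (x - s) / (y - j)`, and `M_j = D_j / (1 - j / y)` is a martingale whose
increments are at most `2` and whose conditional variance is at most `8 x / y` while
`j < y / 2`. Hence `cosh (θ M_j) exp (8 θ² x (y / 2 - j) / y)` is a supermartingale for
`|θ| ≤ 1 / 2`, and since `|M_j| ≥ |D_j|`, optional stopping at the first `k ≤ y / 2` with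
`|D_k| ≥ t` gives the maximal inequality `P(∃ k ≤ y / 2, |D_k| ≥ t) ≤ 2 exp (4 θ² x - θ t)`.
With `θ = t / (8 x)` this is `2 exp (-t² / (16 x))`; doubling for the reflected half and taking
`t = U / 2` gives `c = 1 / 64`. Optional stopping is done by counting: there are
`C(y - j, x - s)` completions of a given `X ∩ [0, j)`.
-/

open scoped Classical

open Finset Real

namespace IntervalDiscrepancy

lemma cast_choose_pred_pred {N m : ℕ} (hN : 0 < N) (hm : 0 < m) :
    ((N - 1).choose (m - 1) : ℝ) = m / N * N.choose m := by
  have h := Nat.add_one_mul_choose_eq (N - 1) (m - 1)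
  rw [Nat.sub_add_cancel hN, Nat.sub_add_cancel hm] at h
  rw [div_mul_eq_mul_div, eq_div_iff (by positivity)]
  exact_mod_cast (mul_comm _ _).trans (h.trans (mul_comm _ _))

lemma cast_choose_pred {N m : ℕ} (hN : 0 < N) :
    ((N - 1).choose m : ℝ) = (1 - m / N) * N.choose m := by
  rcases le_or_gt m N with hmN | hNm
  · have h := Nat.choose_mul_succ_eq (N - 1) m
    rw [Nat.sub_add_cancel hN] at h
    rw [one_sub_div (by positivity), div_mul_eq_mul_div, eq_div_iff (by positivity),
      ← Nat.cast_sub hmN]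
    exact_mod_cast h.trans (mul_comm _ _)
  · rw [Nat.choose_eq_zero_of_lt hNm, Nat.choose_eq_zero_of_lt (by omega)]
    simp

lemma card_filter_powersetCard_map {α : Type*} [Fintype α] (e : α ≃ α) (x : ℕ)
    (Q : Finset α → Prop) [DecidablePred Q]
    [DecidablePred fun X : Finset α => Q (X.map e.toEmbedding)] :
    #{X ∈ powersetCard x univ | Q (X.map e.toEmbedding)} = #{X ∈ powersetCard x univ | Q X} :=
  card_equiv e.finsetCongr fun X => by simp [Equiv.finsetCongr_apply]

lemma two_point_exp_le {p c : ℝ} (hp0 : 0 ≤ p) (hp1 : p ≤ 1) (hc : |c| ≤ 1) :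
    p * exp ((1 - p) * c) + (1 - p) * exp (-(p * c)) ≤ exp (p * c ^ 2) := by
  have hexp : ∀ u : ℝ, |u| ≤ 1 → exp u ≤ 1 + u + u ^ 2 := fun u hu => by
    linarith [le_abs_self (exp u - 1 - u), abs_exp_sub_one_sub_id_le hu]
  have h₁ : |(1 - p) * c| ≤ 1 := by
    rw [abs_mul, abs_of_nonneg (by linarith : 0 ≤ 1 - p)]
    nlinarith [abs_nonneg c]
  have h₀ : |-(p * c)| ≤ 1 := by
    rw [abs_neg, abs_mul, abs_of_nonneg hp0]
    nlinarith [abs_nonneg c]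
  have hq : 0 ≤ 1 - p := by linarith
  calc p * exp ((1 - p) * c) + (1 - p) * exp (-(p * c))
      ≤ p * (1 + (1 - p) * c + ((1 - p) * c) ^ 2)
        + (1 - p) * (1 + -(p * c) + (-(p * c)) ^ 2) := by
        gcongr
        exacts [hexp _ h₁, hexp _ h₀]
    _ = 1 + p * (1 - p) * c ^ 2 := by ring
    _ ≤ 1 + p * c ^ 2 := by nlinarith [mul_nonneg hp0 (sq_nonneg c)]
    _ ≤ exp (p * c ^ 2) := by linarith [add_one_le_exp (p * c ^ 2)]

section Prefix

variable {y : ℕ}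

def below (j : ℕ) (X : Finset (Fin y)) : Finset (Fin y) := {i ∈ X | (i : ℕ) < j}

noncomputable def prefixDev (x : ℕ) (X : Finset (Fin y)) (k : ℕ) : ℝ :=
  #(below k X) - k * x / y

@[simp] lemma below_zero (X : Finset (Fin y)) : below 0 X = ∅ := by
  simp [below]

lemma below_subset (j : ℕ) (X : Finset (Fin y)) : below j X ⊆ X := filter_subset _ _

lemma below_below_of_le {j k : ℕ} (h : j ≤ k) (X : Finset (Fin y)) :
    below j (below k X) = below j X := by
  ext i; simp only [below, mem_filter, and_assoc]
  exact and_congr_right fun _ => ⟨fun h' => h'.2, fun h' => ⟨by omega, h'⟩⟩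

lemma below_succ_eq_insert_iff {j : ℕ} (hj : j < y) {A X : Finset (Fin y)}
    (hA : ∀ a ∈ A, (a : ℕ) < j) :
    below (j + 1) X = insert ⟨j, hj⟩ A ↔ below j X = A ∧ ⟨j, hj⟩ ∈ X := by
  constructor
  · intro h
    refine ⟨?_, below_subset _ _ (h ▸ mem_insert_self _ _)⟩
    rw [← below_below_of_le j.le_succ, h]
    ext i; simp only [below, mem_filter, mem_insert, Fin.ext_iff]
    constructor
    · rintro ⟨hi | hi, hij⟩ <;> [omega; exact hi]
    · exact fun hi => ⟨Or.inr hi, hA i hi⟩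
  · rintro ⟨rfl, hjX⟩
    ext i; simp only [below, mem_filter, mem_insert, Fin.ext_iff]
    constructor
    · rintro ⟨hiX, hij⟩
      rcases Nat.lt_succ_iff_lt_or_eq.1 hij with h | h
      · exact Or.inr ⟨hiX, h⟩
      · exact Or.inl h
    · rintro (hi | ⟨hiX, hij⟩)
      · exact ⟨(Fin.ext hi : i = ⟨j, hj⟩) ▸ hjX, by omega⟩
      · exact ⟨hiX, by omega⟩

lemma below_succ_eq_iff {j : ℕ} (hj : j < y) {A X : Finset (Fin y)}
    (hA : ∀ a ∈ A, (a : ℕ) < j) :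
    below (j + 1) X = A ↔ below j X = A ∧ ⟨j, hj⟩ ∉ X := by
  constructor
  · intro h
    refine ⟨by rw [← below_below_of_le j.le_succ, h]; ext i; simpa [below] using hA i,
      fun hjX => ?_⟩
    have hmem : (⟨j, hj⟩ : Fin y) ∈ below (j + 1) X := mem_filter.2 ⟨hjX, j.lt_succ_self⟩
    rw [h] at hmem
    exact lt_irrefl _ (hA _ hmem)
  · rintro ⟨rfl, hjX⟩
    ext i; simp only [below, mem_filter]
    refine ⟨fun ⟨hiX, hij⟩ => ⟨hiX, ?_⟩, fun ⟨hiX, hij⟩ => ⟨hiX, by omega⟩⟩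
    rcases Nat.lt_succ_iff_lt_or_eq.1 hij with h | h
    · exact h
    · exact absurd ((Fin.ext h : i = ⟨j, hj⟩) ▸ hiX) hjX

lemma card_filter_below_eq_le (x j : ℕ) (A : Finset (Fin y)) (Q : Finset (Fin y) → Prop) :
    #{X ∈ powersetCard x univ | below j X = A ∧ Q X} ≤ (y - j).choose (x - #A) := by
  calc _ ≤ #(powersetCard (x - #A) {i : Fin y | ¬(i : ℕ) < j}) := by
        refine card_le_card_of_injOn (· \ A) (fun X hX => ?_) fun X hX X' hX' h => ?_
        · simp only [coe_filter, Set.mem_ofPred_eq, mem_powersetCard_univ] at hX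
          obtain ⟨hXx, rfl, -⟩ := hX
          refine mem_powersetCard.2 ⟨fun i hi => ?_, ?_⟩
          · simp_all [below]
          · rw [card_sdiff_of_subset (below_subset _ _), hXx]
        · simp only [coe_filter, Set.mem_ofPred_eq] at hX hX'
          have hA : A ⊆ X := hX.2.1 ▸ below_subset _ _
          have hA' : A ⊆ X' := hX'.2.1 ▸ below_subset _ _
          simpa [sdiff_union_of_subset hA, sdiff_union_of_subset hA'] using
            congrArg (· ∪ A) h
    _ = _ := by
        rw [card_powersetCard, filter_not, card_sdiff_of_subset (filter_subset _ _), card_univ,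
          Fintype.card_fin, Fin.card_filter_val_lt]
        congr 1
        omega

lemma card_filter_below_eq_eq_zero {x j : ℕ} {A : Finset (Fin y)} (hA : x < #A)
    (Q : Finset (Fin y) → Prop) :
    #{X ∈ powersetCard x univ | below j X = A ∧ Q X} = 0 := by
  refine card_eq_zero.2 (filter_false_of_mem fun X hX ⟨hXA, _⟩ => ?_)
  have := card_le_card (below_subset j X)
  rw [hXA, (mem_powersetCard_univ.1 hX)] at this
  omega

lemma card_filter_below_eq_eq_add {j : ℕ} (hj : j < y) {A : Finset (Fin y)}
    (hA : ∀ a ∈ A, (a : ℕ) < j) (S : Finset (Finset (Fin y))) (Q : Finset (Fin y) → Prop) :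
    #{X ∈ S | below j X = A ∧ Q X} =
      #{X ∈ S | below (j + 1) X = insert ⟨j, hj⟩ A ∧ Q X} +
        #{X ∈ S | below (j + 1) X = A ∧ Q X} := by
  rw [← card_filter_add_card_filter_not (p := fun X => (⟨j, hj⟩ : Fin y) ∈ X), filter_filter,
    filter_filter]
  congr 2 <;> ext X <;>
    simp only [mem_filter, below_succ_eq_insert_iff hj hA, below_succ_eq_iff hj hA] <;> tauto

lemma card_filter_below_eq_le_mul (x j : ℕ) (A : Finset (Fin y)) (Q : Finset (Fin y) → Prop)
    {c : ℝ} (hc : 1 ≤ c) :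
    (#{X ∈ powersetCard x univ | below j X = A ∧ Q X} : ℝ) ≤ c * (y - j).choose (x - #A) :=
  calc _ ≤ ((y - j).choose (x - #A) : ℝ) := by exact_mod_cast card_filter_below_eq_le x j A Q
    _ ≤ _ := le_mul_of_one_le_left (Nat.cast_nonneg _) hc

/-- Given `below j X = A`, the point `j` lies in `X` with probability `(x - #A) / (y - j)`. -/
lemma card_filter_below_eq_le_of_succ {x j : ℕ} (hj : j < y) {A : Finset (Fin y)}
    (hA : ∀ a ∈ A, (a : ℕ) < j) (hAx : #A ≤ x) (Q : Finset (Fin y) → Prop) {a₀ a₁ : ℝ}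
    (h₁ : #A < x → (#{X ∈ powersetCard x univ | below (j + 1) X = insert ⟨j, hj⟩ A ∧ Q X} : ℝ)
      ≤ a₁ * (y - (j + 1)).choose (x - (#A + 1)))
    (h₀ : (#{X ∈ powersetCard x univ | below (j + 1) X = A ∧ Q X} : ℝ)
      ≤ a₀ * (y - (j + 1)).choose (x - #A)) :
    (#{X ∈ powersetCard x univ | below j X = A ∧ Q X} : ℝ)
      ≤ ((x - #A : ℝ) / (y - j) * a₁ + (1 - (x - #A : ℝ) / (y - j)) * a₀)
        * (y - j).choose (x - #A) := by
  have hN : 0 < y - j := by omega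
  have hp : (x - #A : ℝ) / (y - j) = ((x - #A : ℕ) : ℝ) / (y - j : ℕ) := by
    rw [Nat.cast_sub hAx, Nat.cast_sub hj.le]
  have hA₀ : (⟨j, hj⟩ : Fin y) ∉ A := fun h => lt_irrefl _ (hA _ h)
  rw [← Nat.sub_sub, cast_choose_pred hN, ← hp] at h₀
  have h₁' : (#{X ∈ powersetCard x univ | below (j + 1) X = insert ⟨j, hj⟩ A ∧ Q X} : ℝ)
      ≤ (x - #A : ℝ) / (y - j) * a₁ * (y - j).choose (x - #A) := by
    rcases hAx.lt_or_eq with hlt | rfl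
    · have h := h₁ hlt
      rw [← Nat.sub_sub, ← Nat.sub_sub, cast_choose_pred_pred hN (by omega), ← hp] at h
      linarith
    · rw [card_filter_below_eq_eq_zero (by rw [card_insert_of_notMem hA₀]; omega)]
      simp
  rw [card_filter_below_eq_eq_add hj hA]
  push_cast
  linarith

variable {x : ℕ} {X : Finset (Fin y)}

lemma abs_prefixDev_le (hX : #X = x) {k : ℕ} (hk : k ≤ y) : |prefixDev x X k| ≤ x := by
  have hS : (#(below k X) : ℝ) ≤ x := by exact_mod_cast hX ▸ card_le_card (below_subset k X)
  have hm : (k : ℝ) * x / y ≤ x :=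
    div_le_of_le_mul₀ (Nat.cast_nonneg _) (Nat.cast_nonneg _) (by
      have : (k : ℝ) ≤ y := by exact_mod_cast hk
      nlinarith [Nat.cast_nonneg (α := ℝ) x])
  have hm0 : 0 ≤ (k : ℝ) * x / y := by positivity
  rw [prefixDev, abs_sub_le_iff]
  constructor <;> linarith [Nat.cast_nonneg (α := ℝ) #(below k X)]

lemma prefixDev_map_rev (hX : #X = x) {k : ℕ} (hk : k ≤ y) :
    prefixDev x (X.map Fin.revPerm.toEmbedding) (y - k) = -prefixDev x X k := by
  have hcard : #(below (y - k) (X.map Fin.revPerm.toEmbedding)) + #(below k X) = x := by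
    rw [← hX, ← card_filter_add_card_filter_not (s := X) (p := fun i : Fin y => (i : ℕ) < k),
      add_comm]
    congr 1
    rw [below, filter_map, card_map]
    congr 1
    ext i
    simp only [mem_filter, Function.comp, Equiv.coe_toEmbedding, Fin.revPerm_apply, Fin.val_rev]
    have := i.isLt
    exact and_congr_right fun _ => by omega
  rcases Nat.eq_zero_or_pos y with rfl | hy
  · obtain rfl := X.eq_empty_of_isEmpty
    subst hX
    simp [prefixDev, below]
  have hyR : (y : ℝ) ≠ 0 := by positivity
  have hcardR : (#(below (y - k) (X.map Fin.revPerm.toEmbedding)) : ℝ) = x - #(below k X) := by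
    rw [← hcard]; push_cast; ring
  rw [prefixDev, prefixDev, hcardR, Nat.cast_sub hk]
  field_simp
  ring

lemma card_inter_Icc_sub {a b : Fin y} (hab : a ≤ b) :
    (#(X ∩ Icc a b) : ℝ) - #(Icc a b) * x / y = prefixDev x X (b + 1 : ℕ) - prefixDev x X a := by
  have hsub : below a X ⊆ below (b + 1 : ℕ) X := fun i hi => by
    simp only [below, mem_filter] at hi ⊢
    exact ⟨hi.1, by have := Fin.le_def.1 hab; omega⟩
  have hinter : X ∩ Icc a b = below (b + 1 : ℕ) X \ below a X := by
    ext i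
    simp only [below, mem_inter, mem_Icc, mem_sdiff, mem_filter, Fin.le_def, not_and]
    exact ⟨fun ⟨hiX, hai, hib⟩ => ⟨⟨hiX, by omega⟩, fun _ => by omega⟩,
      fun ⟨⟨hiX, hib⟩, hai⟩ => ⟨hiX, by have := hai hiX; omega, by omega⟩⟩
  rw [hinter, card_sdiff_of_subset hsub, Fin.card_Icc, Nat.cast_sub (card_le_card hsub),
    Nat.cast_sub (by have := Fin.le_def.1 hab; omega), prefixDev, prefixDev]
  push_cast
  ring

lemma exists_half_le_abs_prefixDev {a b : Fin y} {U : ℝ} (hU : 0 < U)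
    (h : U ≤ |(#(X ∩ Icc a b) : ℝ) - #(Icc a b) * x / y|) : ∃ k ≤ y, U / 2 ≤ |prefixDev x X k| := by
  rcases le_or_gt a b with hab | hba
  · rw [card_inter_Icc_sub hab] at h
    by_contra! hk
    linarith [abs_sub (prefixDev x X (b + 1 : ℕ)) (prefixDev x X a), hk _ b.isLt, hk _ a.isLt.le]
  · simp [Icc_eq_empty (not_le.2 hba)] at h
    linarith

lemma exists_le_half_abs_prefixDev_or (hX : #X = x) {t : ℝ}
    (h : ∃ k ≤ y, t ≤ |prefixDev x X k|) :
    (∃ k ≤ y / 2, t ≤ |prefixDev x X k|) ∨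
      ∃ k ≤ y / 2, t ≤ |prefixDev x (X.map Fin.revPerm.toEmbedding) k| := by
  obtain ⟨k, hk, hkt⟩ := h
  by_cases hk2 : k ≤ y / 2
  · exact Or.inl ⟨k, hk2, hkt⟩
  · refine Or.inr ⟨y - k, by omega, ?_⟩
    rwa [prefixDev_map_rev hX hk, abs_neg]

end Prefix

section OptionalStopping

variable {y x K : ℕ} (P : ℕ → ℕ → Prop)

def HitsBetween (j K : ℕ) (X : Finset (Fin y)) : Prop := ∃ k, j ≤ k ∧ k ≤ K ∧ P k #(below k X)

variable {P}

lemma hitsBetween_iff_succ {j : ℕ} {X : Finset (Fin y)} (hP : ¬P j #(below j X)) :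
    HitsBetween P j K X ↔ HitsBetween P (j + 1) K X := by
  refine ⟨fun ⟨k, hjk, hkK, hPk⟩ => ?_, fun ⟨k, hjk, hkK, hPk⟩ => ⟨k, by omega, hkK, hPk⟩⟩
  rcases hjk.eq_or_lt with rfl | hjk
  · exact absurd hPk hP
  · exact ⟨k, hjk, hkK, hPk⟩

lemma not_hitsBetween_of_lt {j : ℕ} (h : K < j) (X : Finset (Fin y)) : ¬HitsBetween P j K X :=
  fun ⟨_, hjk, hkK, _⟩ => by omega

variable {F : ℕ → ℕ → ℝ}

theorem card_filter_below_eq_hitsBetween_le (hK : K ≤ y) (hF0 : ∀ j s, 0 ≤ F j s)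
    (hFP : ∀ j s, j ≤ K → P j s → 1 ≤ F j s)
    (hF : ∀ j s, j < K → s ≤ x → x - s ≤ y - j →
      (x - s : ℝ) / (y - j) * F (j + 1) (s + 1) + (1 - (x - s : ℝ) / (y - j)) * F (j + 1) s
        ≤ F j s)
    (d : ℕ) : ∀ j, j + d = K → ∀ A : Finset (Fin y), (∀ a ∈ A, (a : ℕ) < j) → #A ≤ x →
      (#{X ∈ powersetCard x univ | below j X = A ∧ HitsBetween P j K X} : ℝ)
        ≤ F j #A * (y - j).choose (x - #A) := by
  induction d with
  | zero =>
    intro j hj A _ _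
    by_cases hP : P j #A
    · exact card_filter_below_eq_le_mul x j A _ (hFP j #A (by omega) hP)
    rw [filter_congr fun X _ => and_congr_right fun (hXA : below j X = A) =>
      hitsBetween_iff_succ (K := K) (hXA ▸ hP)]
    simp only [not_hitsBetween_of_lt (by omega : K < j + 1), and_false, filter_false,
      card_empty, Nat.cast_zero]
    exact mul_nonneg (hF0 _ _) (Nat.cast_nonneg _)
  | succ d ih =>
    intro j hj A hA hAx
    by_cases hP : P j #A
    · exact card_filter_below_eq_le_mul x j A _ (hFP j #A (by omega) hP)
    have hjy : j < y := by omega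
    have hA₀ : (⟨j, hjy⟩ : Fin y) ∉ A := fun h => lt_irrefl _ (hA _ h)
    rw [filter_congr fun X _ => and_congr_right fun (hXA : below j X = A) =>
      hitsBetween_iff_succ (K := K) (hXA ▸ hP)]
    refine (card_filter_below_eq_le_of_succ hjy hA hAx _ (a₁ := F (j + 1) (#A + 1)) (fun hlt => ?_)
      (ih (j + 1) (by omega) A (fun a ha => (hA a ha).trans j.lt_succ_self) hAx)).trans ?_
    · simpa [card_insert_of_notMem hA₀] using ih (j + 1) (by omega) (insert ⟨j, hjy⟩ A)
        (fun a ha => by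
          rcases mem_insert.1 ha with rfl | ha
          exacts [j.lt_succ_self, (hA a ha).trans j.lt_succ_self])
        (by rw [card_insert_of_notMem hA₀]; omega)
    by_cases hm : x - #A ≤ y - j
    · exact mul_le_mul_of_nonneg_right (hF j #A (by omega) hAx hm) (Nat.cast_nonneg _)
    · simp [Nat.choose_eq_zero_of_lt (not_le.1 hm)]

theorem card_filter_hitsBetween_le (hK : K ≤ y) (hF0 : ∀ j s, 0 ≤ F j s)
    (hFP : ∀ j s, j ≤ K → P j s → 1 ≤ F j s)
    (hF : ∀ j s, j < K → s ≤ x → x - s ≤ y - j →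
      (x - s : ℝ) / (y - j) * F (j + 1) (s + 1) + (1 - (x - s : ℝ) / (y - j)) * F (j + 1) s
        ≤ F j s) :
    (#{X ∈ powersetCard x (univ : Finset (Fin y)) | ∃ k ≤ K, P k #(below k X)} : ℝ)
      ≤ F 0 0 * y.choose x := by
  simpa [HitsBetween] using card_filter_below_eq_hitsBetween_le hK hF0 hFP hF K 0 (zero_add K) ∅
    (by simp) (by simp)

end OptionalStopping

/-- `M_j = D_j / (1 - j / y)` as a function of `s = S_j`. -/
noncomputable def scaledDev (x y j s : ℕ) : ℝ := ((s : ℝ) * y - j * x) / ((y : ℝ) - j)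

lemma scaledDev_succ_right (x y j s : ℕ) :
    scaledDev x y j (s + 1) = scaledDev x y j s + y / (y - j) := by
  unfold scaledDev
  rw [← add_div]
  push_cast
  ring_nf

lemma scaledDev_succ_left {x y j : ℕ} (hj : j + 1 < y) (s : ℕ) :
    scaledDev x y (j + 1) s =
      scaledDev x y j s - (x - s : ℝ) / (y - j) * (y / (y - (j + 1))) := by
  have hjR : (j : ℝ) + 1 < y := by exact_mod_cast hj
  have h₁ : (y : ℝ) - j ≠ 0 := by linarith
  have h₂ : (y : ℝ) - (j + 1) ≠ 0 := by linarith
  unfold scaledDev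
  push_cast
  field_simp
  ring

lemma abs_sub_le_abs_scaledDev {x y j : ℕ} (hj : j < y) (s : ℕ) :
    |(s : ℝ) - j * x / y| ≤ |scaledDev x y j s| := by
  have hjR : (j : ℝ) < y := by exact_mod_cast hj
  have hyj : (0 : ℝ) < y - j := by linarith
  have hy : (0 : ℝ) < y := by linarith [Nat.cast_nonneg (α := ℝ) j]
  have h : scaledDev x y j s = ((s : ℝ) - j * x / y) * (y / (y - j)) := by
    unfold scaledDev
    field_simp
  rw [h, abs_mul]
  refine le_mul_of_one_le_right (abs_nonneg _) ?_
  rw [abs_of_pos (div_pos hy hyj), one_le_div hyj]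
  linarith [Nat.cast_nonneg (α := ℝ) j]

lemma exp_scaledDev_supermartingale {x y j s : ℕ} (hj : 2 * (j + 1) ≤ y) (hs : s ≤ x)
    (hxs : x - s ≤ y - j) {μ : ℝ} (hμ : |μ| ≤ 1 / 2) :
    (x - s : ℝ) / (y - j) * exp (μ * scaledDev x y (j + 1) (s + 1))
      + (1 - (x - s : ℝ) / (y - j)) * exp (μ * scaledDev x y (j + 1) s)
      ≤ exp (μ ^ 2 * (8 * x / y)) * exp (μ * scaledDev x y j s) := by
  rw [scaledDev_succ_right, scaledDev_succ_left (by omega)]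
  push_cast
  set p : ℝ := (x - s : ℝ) / (y - j)
  set g : ℝ := y / (y - (j + 1))
  have hjR : 2 * ((j : ℝ) + 1) ≤ y := by exact_mod_cast hj
  have hxsR : (x : ℝ) - s ≤ y - j := by
    rw [← Nat.cast_sub hs, ← Nat.cast_sub (by omega : j ≤ y)]
    exact_mod_cast hxs
  have hyj : (0 : ℝ) < y - j := by linarith
  have hp0 : 0 ≤ p := div_nonneg (by linarith [(Nat.cast_le (α := ℝ)).2 hs]) hyj.le
  have hp1 : p ≤ 1 := (div_le_one hyj).2 hxsR
  have hp : p ≤ 2 * x / y := by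
    rw [div_le_div_iff₀ hyj (by linarith)]
    nlinarith [Nat.cast_nonneg (α := ℝ) s, Nat.cast_nonneg (α := ℝ) x]
  have hg0 : 0 ≤ g := div_nonneg (by linarith) (by linarith)
  have hg : g ≤ 2 := by
    rw [div_le_iff₀ (by linarith)]
    linarith
  have hc : |μ * g| ≤ 1 := by
    rw [abs_mul, abs_of_nonneg hg0]
    nlinarith [abs_nonneg μ]
  have hvar : p * (μ * g) ^ 2 ≤ μ ^ 2 * (8 * x / y) :=
    calc p * (μ * g) ^ 2 = μ ^ 2 * (p * g ^ 2) := by ring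
      _ ≤ μ ^ 2 * (2 * x / y * 2 ^ 2) := by gcongr
      _ = _ := by ring
  calc _ = (p * exp ((1 - p) * (μ * g)) + (1 - p) * exp (-(p * (μ * g))))
        * exp (μ * scaledDev x y j s) := by
        rw [add_mul, mul_assoc, mul_assoc, ← exp_add, ← exp_add]
        ring_nf
    _ ≤ exp (p * (μ * g) ^ 2) * exp (μ * scaledDev x y j s) := by
        gcongr
        exact two_point_exp_le hp0 hp1 hc
    _ ≤ _ := by gcongr

noncomputable def expWeight (x y K : ℕ) (θ t : ℝ) (j s : ℕ) : ℝ :=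
  (exp (θ * scaledDev x y j s) + exp (-(θ * scaledDev x y j s))) *
    exp (θ ^ 2 * (8 * x / y) * (K - j) - θ * t)

lemma one_le_expWeight {x y K j : ℕ} (hjK : j ≤ K) (hjy : j < y) {θ : ℝ} (hθ : 0 ≤ θ) {t : ℝ}
    {s : ℕ} (hts : t ≤ |(s : ℝ) - j * x / y|) : 1 ≤ expWeight x y K θ t j s := by
  have hjK : (j : ℝ) ≤ K := by exact_mod_cast hjK
  have hM := hts.trans (abs_sub_le_abs_scaledDev hjy s)
  calc (1 : ℝ) ≤ exp |θ * scaledDev x y j s| * exp (-(θ * t)) := by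
        rw [← exp_add, abs_mul, abs_of_nonneg hθ]
        exact one_le_exp (by nlinarith)
    _ ≤ expWeight x y K θ t j s := by
        unfold expWeight
        gcongr
        · exact exp_abs_le _
        · nlinarith [mul_nonneg (sq_nonneg θ) (by positivity : (0 : ℝ) ≤ 8 * x / y),
            sub_nonneg.2 hjK]

lemma expWeight_supermartingale {x y K j s : ℕ} (hj : 2 * (j + 1) ≤ y) (hs : s ≤ x)
    (hxs : x - s ≤ y - j) {θ : ℝ} (hθ : |θ| ≤ 1 / 2) (t : ℝ) :
    (x - s : ℝ) / (y - j) * expWeight x y K θ t (j + 1) (s + 1)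
      + (1 - (x - s : ℝ) / (y - j)) * expWeight x y K θ t (j + 1) s
      ≤ expWeight x y K θ t j s := by
  have hpos := exp_scaledDev_supermartingale hj hs hxs hθ
  have hneg := exp_scaledDev_supermartingale hj hs hxs (μ := -θ) (by rwa [abs_neg])
  simp only [neg_mul, neg_sq] at hneg
  set v : ℝ := 8 * x / y
  have hE : exp (θ ^ 2 * v) * exp (θ ^ 2 * v * (K - (j + 1 : ℕ)) - θ * t)
      = exp (θ ^ 2 * v * (K - j) - θ * t) := by
    rw [← exp_add]; push_cast; ring_nf
  calc _ = ((x - s : ℝ) / (y - j) * exp (θ * scaledDev x y (j + 1) (s + 1))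
        + (1 - (x - s : ℝ) / (y - j)) * exp (θ * scaledDev x y (j + 1) s)
        + ((x - s : ℝ) / (y - j) * exp (-(θ * scaledDev x y (j + 1) (s + 1)))
        + (1 - (x - s : ℝ) / (y - j)) * exp (-(θ * scaledDev x y (j + 1) s))))
        * exp (θ ^ 2 * v * (K - (j + 1 : ℕ)) - θ * t) := by
        unfold expWeight; ring
    _ ≤ (exp (θ ^ 2 * v) * exp (θ * scaledDev x y j s)
        + exp (θ ^ 2 * v) * exp (-(θ * scaledDev x y j s)))
        * exp (θ ^ 2 * v * (K - (j + 1 : ℕ)) - θ * t) := by gcongr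
    _ = expWeight x y K θ t j s := by unfold expWeight; rw [← hE]; ring

theorem card_filter_exists_le_half_abs_prefixDev_le {x y : ℕ} (hy : 0 < y) {θ : ℝ} (t : ℝ)
    (hθ0 : 0 ≤ θ) (hθ : θ ≤ 1 / 2) :
    (#{X ∈ powersetCard x (univ : Finset (Fin y)) | ∃ k ≤ y / 2, t ≤ |prefixDev x X k|} : ℝ)
      ≤ 2 * exp (4 * θ ^ 2 * x - θ * t) * y.choose x := by
  have hbound := card_filter_hitsBetween_le (P := fun j s => t ≤ |(s : ℝ) - j * x / y|)
    (F := expWeight x y (y / 2) θ t) (Nat.div_le_self y 2)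
    (fun _ _ => by unfold expWeight; positivity)
    (fun j s hj => one_le_expWeight hj (by omega) hθ0)
    (fun j s hj hs hxs => expWeight_supermartingale (by omega) hs hxs
      (by rwa [abs_of_nonneg hθ0]) t)
  refine hbound.trans (mul_le_mul_of_nonneg_right ?_ (Nat.cast_nonneg _))
  have hK : ((y / 2 : ℕ) : ℝ) * 2 ≤ y := by exact_mod_cast Nat.div_mul_le_self y 2
  have hvK : 8 * x / y * ((y / 2 : ℕ) : ℝ) ≤ 4 * x := by
    rw [div_mul_eq_mul_div, div_le_iff₀ (by exact_mod_cast hy)]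
    nlinarith [Nat.cast_nonneg (α := ℝ) x]
  simp only [expWeight, scaledDev, CharP.cast_eq_zero]
  norm_num
  nlinarith [sq_nonneg θ]

theorem card_filter_exists_abs_prefixDev_le {x y : ℕ} (hxy : x ≤ y) {t : ℝ} (ht : 0 < t) :
    (#{X ∈ powersetCard x (univ : Finset (Fin y)) | ∃ k ≤ y, t ≤ |prefixDev x X k|} : ℝ)
      ≤ 4 * exp (-(t ^ 2 / (16 * x))) * y.choose x := by
  rcases lt_or_ge (x : ℝ) t with htx | htx
  · rw [filter_false_of_mem fun X hX ⟨k, hk, hkt⟩ =>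
      (abs_prefixDev_le (mem_powersetCard_univ.1 hX) hk).not_gt (htx.trans_le hkt)]
    simp only [card_empty, Nat.cast_zero]
    positivity
  have hx : (0 : ℝ) < x := ht.trans_le htx
  have hy : 0 < y := by
    have : 0 < x := by exact_mod_cast hx
    omega
  have hθ : t / (8 * x) ≤ 1 / 2 := by rw [div_le_iff₀ (by positivity)]; linarith
  have hhalf := card_filter_exists_le_half_abs_prefixDev_le (x := x) hy t (by positivity) hθ
  rw [show 4 * (t / (8 * x)) ^ 2 * x - t / (8 * x) * t = -(t ^ 2 / (16 * x)) by
    field_simp; ring] at hhalf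
  have hsplit : {X ∈ powersetCard x (univ : Finset (Fin y)) | ∃ k ≤ y, t ≤ |prefixDev x X k|} ⊆
      {X ∈ powersetCard x (univ : Finset (Fin y)) | ∃ k ≤ y / 2, t ≤ |prefixDev x X k|} ∪
      {X ∈ powersetCard x (univ : Finset (Fin y)) | ∃ k ≤ y / 2,
        t ≤ |prefixDev x (X.map Fin.revPerm.toEmbedding) k|} := by
    rw [← filter_or]
    exact monotone_filter_right _ fun X hX =>
      exists_le_half_abs_prefixDev_or (mem_powersetCard_univ.1 hX)
  have hcard := (card_le_card hsplit).trans (card_union_le _ _)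
  rw [card_filter_powersetCard_map Fin.revPerm x
    (fun X => ∃ k ≤ y / 2, t ≤ |prefixDev x X k|)] at hcard
  have hcast : (#{X ∈ powersetCard x (univ : Finset (Fin y)) | ∃ k ≤ y, t ≤ |prefixDev x X k|} : ℝ)
      ≤ 2 * #{X ∈ powersetCard x (univ : Finset (Fin y)) | ∃ k ≤ y / 2, t ≤ |prefixDev x X k|} := by
    exact_mod_cast hcard.trans (two_mul _).ge
  linarith

end IntervalDiscrepancy

open IntervalDiscrepancy

/-- There is an absolute constant `c > 0` such that: if `X` is a uniform random `x`-subset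
of an interval `Y` of `y` points, then the probability that some subinterval `Z` of `Y`
satisfies `||X ∩ Z| - |Z|·x/y| ≥ U` is at most `8 exp(-c U² / x)`. -/
theorem stmt8 :
    ∃ c : ℝ, 0 < c ∧ ∀ x y : ℕ, 0 < x → x ≤ y → ∀ U : ℝ, 0 < U →
      (((Finset.powersetCard x (Finset.univ : Finset (Fin y))).filter
          (fun X => ∃ a b : Fin y,
            U ≤ |((X ∩ Finset.Icc a b).card : ℝ) -
                  ((Finset.Icc a b).card : ℝ) * (x : ℝ) / (y : ℝ)|)).card : ℝ)
          / (Nat.choose y x : ℝ)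
        ≤ 8 * Real.exp (-c * U ^ 2 / (x : ℝ)) := by
  refine ⟨1 / 64, by norm_num, fun x y _ hxy U hU => ?_⟩
  rw [div_le_iff₀ (by exact_mod_cast Nat.choose_pos hxy)]
  calc _ ≤ (#{X ∈ powersetCard x (univ : Finset (Fin y)) |
            ∃ k ≤ y, U / 2 ≤ |prefixDev x X k|} : ℝ) := by
        refine Nat.cast_le.2 (card_le_card (monotone_filter_right _ fun X _ hX => ?_))
        obtain ⟨a, b, hab⟩ := hX
        exact exists_half_le_abs_prefixDev hU hab
    _ ≤ 4 * exp (-((U / 2) ^ 2 / (16 * x))) * y.choose x :=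
        card_filter_exists_abs_prefixDev_le hxy (half_pos hU)
    _ ≤ 8 * exp (-(1 / 64) * U ^ 2 / x) * y.choose x := by
        rw [show -((U / 2) ^ 2 / (16 * x)) = -(1 / 64) * U ^ 2 / x by ring]
        gcongr
        norm_num
end

section
/- Let Q'(i) denote the probability that a random walk on Z^2 started at the origin, with i.i.d. steps distributed as the difference of two independent uniform elements of S = {(0,0),(1,0),(0,1)}, does not return to the origin during steps 1,...,i, and let P'(i) denote the probability that the walk is at the origin at time i. If P'(i) = Θ(1/i) for 1 ≤ i ≤ s, then Q'(s) = O(1/log s). -/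
/-! Conditioning on the last visit to the origin before time `s` gives
`∑_{i ≤ s} P'(i) Q'(s - i) ≤ 1`. Since `Q'` is non-increasing, each term with `i ≥ 1` is at least
`P'(i) Q'(s) ≥ c₁ Q'(s) / i`, hence `c₁ Q'(s) H_s ≤ 1`, and the harmonic number `H_s` exceeds
`log s`. -/

open scoped Classical BigOperators

noncomputable section

/-- The step set `S = {(0,0), (1,0), (0,1)}` of the paper's planar walk. -/
def S11 : Finset (ℤ × ℤ) := {(0, 0), (1, 0), (0, 1)}

/-- `P'(i)`: the probability that the walk on `ℤ²` with i.i.d. steps distributed as the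
difference of two independent uniform elements of `S11` is at the origin at time `i`. -/
def P11 (i : ℕ) : ℝ :=
  ((Finset.univ.filter (fun f : Fin i → ↥S11 × ↥S11 =>
      (∑ j, (((f j).1 : ℤ × ℤ) - ((f j).2 : ℤ × ℤ))) = 0)).card : ℝ) / 9 ^ i

/-- `Q'(s)`: the probability that the same walk does not return to the origin during
steps `1, ..., s`. -/
def Q11 (s : ℕ) : ℝ :=
  ((Finset.univ.filter (fun f : Fin s → ↥S11 × ↥S11 =>
      ∀ n : ℕ, 1 ≤ n → n ≤ s →
        (∑ j ∈ Finset.univ.filter (fun j : Fin s => (j : ℕ) < n),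
          (((f j).1 : ℤ × ℤ) - ((f j).2 : ℤ × ℤ))) ≠ 0)).card : ℝ) / 9 ^ s

open Finset

namespace RandomWalk

/- A walk of length `n` is a word `f : Fin n → α`, all words being equally likely; its `j`-th step
is `X (f j)`. -/

variable {α G : Type*} [AddCommGroup G]

section Position

variable {X : α → G}

variable (X) in
def position {n : ℕ} (f : Fin n → α) (k : ℕ) : G :=
  ∑ j ∈ univ.filter (fun j : Fin n => (j : ℕ) < k), X (f j)

lemma position_of_length_le {n k : ℕ} (f : Fin n → α) (h : n ≤ k) :
    position X f k = ∑ j, X (f j) := by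
  rw [position, filter_true_of_mem fun j _ => lt_of_lt_of_le j.is_lt h]

lemma position_append_of_le {i m k : ℕ} (g : Fin i → α) (h : Fin m → α) (hk : k ≤ i) :
    position X (Fin.append g h) k = position X g k := by
  simp only [position, sum_filter, Fin.sum_univ_add, Fin.append_left, Fin.append_right,
    Fin.val_castAdd, Fin.val_natAdd]
  rw [add_eq_left]
  exact sum_eq_zero fun j _ => if_neg (by omega)

lemma position_append_add {i m : ℕ} (g : Fin i → α) (h : Fin m → α) (l : ℕ) :
    position X (Fin.append g h) (i + l) = ∑ j, X (g j) + position X h l := by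
  simp only [position, sum_filter, Fin.sum_univ_add, Fin.append_left, Fin.append_right,
    Fin.val_castAdd, Fin.val_natAdd, add_lt_add_iff_left]
  rw [sum_congr rfl fun j _ => if_pos (by omega)]

end Position

variable [Fintype α] (X : α → G)

def returnPaths (n : ℕ) : Finset (Fin n → α) := {f | ∑ j, X (f j) = 0}

def escapePaths (n : ℕ) : Finset (Fin n → α) :=
  {f | ∀ k, 1 ≤ k → k ≤ n → position X f k ≠ 0}

def lastReturnPaths (n i : ℕ) : Finset (Fin n → α) :=
  {f | position X f i = 0 ∧ ∀ k, i < k → k ≤ n → position X f k ≠ 0}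

def returnProb (n : ℕ) : ℝ := #(returnPaths X n) / Fintype.card α ^ n

def escapeProb (n : ℕ) : ℝ := #(escapePaths X n) / Fintype.card α ^ n

variable {X}

lemma card_returnPaths_mul_card_escapePaths_le (i m : ℕ) :
    #(returnPaths X i) * #(escapePaths X m) ≤ #(lastReturnPaths X (i + m) i) := by
  rw [← card_product]
  refine card_le_card_of_injOn (fun p => Fin.append p.1 p.2) (fun p hp => ?_)
    (Fin.appendEquiv i m).injective.injOn
  simp only [coe_product, Set.mem_prod, mem_coe, returnPaths, escapePaths, mem_filter,
    mem_univ, true_and] at hp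
  obtain ⟨hg, hh⟩ := hp
  simp only [coe_filter, lastReturnPaths, mem_univ, true_and, Set.mem_ofPred_eq]
  refine ⟨by rw [position_append_of_le _ _ le_rfl, position_of_length_le _ le_rfl, hg], ?_⟩
  intro k hik hk
  obtain ⟨l, rfl⟩ := Nat.exists_eq_add_of_lt hik
  rw [add_assoc, position_append_add, hg, zero_add]
  exact hh (l + 1) (by omega) (by omega)

lemma pairwiseDisjoint_lastReturnPaths (n : ℕ) :
    (range (n + 1) : Set ℕ).PairwiseDisjoint (lastReturnPaths X n) := by
  intro i hi i' hi' hne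
  simp only [coe_range, Set.mem_Iio] at hi hi'
  refine disjoint_left.2 fun f hf hf' => ?_
  simp only [lastReturnPaths, mem_filter, mem_univ, true_and] at hf hf'
  rcases hne.lt_or_gt with h | h
  · exact hf.2 i' h (by omega) hf'.1
  · exact hf'.2 i h (by omega) hf.1

lemma sum_card_returnPaths_mul_card_escapePaths_le (n : ℕ) :
    ∑ i ∈ range (n + 1), #(returnPaths X i) * #(escapePaths X (n - i)) ≤ Fintype.card α ^ n :=
  calc ∑ i ∈ range (n + 1), #(returnPaths X i) * #(escapePaths X (n - i))
      ≤ ∑ i ∈ range (n + 1), #(lastReturnPaths X n i) := sum_le_sum fun i hi => by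
        obtain ⟨m, rfl⟩ := Nat.exists_eq_add_of_le (Nat.lt_succ_iff.1 (mem_range.1 hi))
        rw [Nat.add_sub_cancel_left]
        exact card_returnPaths_mul_card_escapePaths_le i m
    _ = #((range (n + 1)).biUnion (lastReturnPaths X n)) :=
        (card_biUnion (pairwiseDisjoint_lastReturnPaths n)).symm
    _ ≤ Fintype.card α ^ n := by
        simpa using card_le_univ ((range (n + 1)).biUnion (lastReturnPaths X n))

lemma card_escapePaths_add_le (m l : ℕ) :
    #(escapePaths X (m + l)) ≤ #(escapePaths X m) * Fintype.card α ^ l := by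
  have hpaths : Fintype.card α ^ l = #(univ : Finset (Fin l → α)) := by simp
  rw [hpaths, ← card_product]
  refine card_le_card_of_injOn (Fin.appendEquiv m l).symm (fun f hf => ?_)
    (Fin.appendEquiv m l).symm.injective.injOn
  simp only [escapePaths, coe_filter, mem_univ, true_and, Set.mem_ofPred_eq] at hf
  simp only [coe_product, Set.mem_prod, coe_filter, escapePaths, mem_univ, true_and,
    Set.mem_ofPred_eq, coe_univ, Set.mem_univ, and_true]
  intro k hk hkm
  rw [← position_append_of_le _ (fun j => f (Fin.natAdd m j)) hkm]
  simpa [Fin.append_castAdd_natAdd] using hf k hk (by omega)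

lemma returnProb_nonneg (n : ℕ) : 0 ≤ returnProb X n := by
  unfold returnProb; positivity

lemma escapeProb_nonneg (n : ℕ) : 0 ≤ escapeProb X n := by
  unfold escapeProb; positivity

variable [Nonempty α]

lemma escapeProb_antitone : Antitone (escapeProb X) := by
  intro m s hms
  obtain ⟨l, rfl⟩ := Nat.exists_eq_add_of_le hms
  have hcard : (0 : ℝ) < Fintype.card α := by exact_mod_cast Fintype.card_pos
  unfold escapeProb
  rw [div_le_div_iff₀ (by positivity) (by positivity)]
  calc (#(escapePaths X (m + l)) : ℝ) * Fintype.card α ^ m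
      ≤ #(escapePaths X m) * Fintype.card α ^ l * Fintype.card α ^ m := by
        gcongr; exact_mod_cast card_escapePaths_add_le m l
    _ = #(escapePaths X m) * Fintype.card α ^ (m + l) := by ring

lemma sum_returnProb_mul_escapeProb_le_one (n : ℕ) :
    ∑ i ∈ range (n + 1), returnProb X i * escapeProb X (n - i) ≤ 1 := by
  have hcard : (0 : ℝ) < Fintype.card α ^ n := by
    have : 0 < Fintype.card α := Fintype.card_pos
    positivity
  have hterm : ∀ i ∈ range (n + 1), returnProb X i * escapeProb X (n - i)
      = (#(returnPaths X i) * #(escapePaths X (n - i)) : ℕ) / Fintype.card α ^ n := by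
    intro i hi
    rw [returnProb, escapeProb, div_mul_div_comm, ← pow_add,
      Nat.add_sub_cancel' (Nat.lt_succ_iff.1 (mem_range.1 hi)), Nat.cast_mul]
  rw [sum_congr rfl hterm, ← sum_div, div_le_one hcard]
  exact_mod_cast sum_card_returnPaths_mul_card_escapePaths_le n

lemma mul_escapeProb_mul_log_le_one {c : ℝ} (hc : 0 ≤ c) {s : ℕ}
    (hP : ∀ i, 1 ≤ i → i ≤ s → c / i ≤ returnProb X i) :
    c * escapeProb X s * Real.log s ≤ 1 := by
  have hlog : Real.log s ≤ ∑ i ∈ Icc 1 s, (i : ℝ)⁻¹ := by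
    simpa [harmonic_eq_sum_Icc] using log_le_harmonic_floor (s : ℝ) s.cast_nonneg
  have hq := escapeProb_nonneg (X := X) s
  calc c * escapeProb X s * Real.log s
      ≤ c * escapeProb X s * ∑ i ∈ Icc 1 s, (i : ℝ)⁻¹ := by gcongr
    _ = ∑ i ∈ Icc 1 s, c / i * escapeProb X s := by
        rw [mul_sum]; exact sum_congr rfl fun i _ => by ring
    _ ≤ ∑ i ∈ Icc 1 s, returnProb X i * escapeProb X (s - i) := sum_le_sum fun i hi => by
        obtain ⟨hi1, his⟩ := mem_Icc.1 hi
        exact mul_le_mul (hP i hi1 his) (escapeProb_antitone (Nat.sub_le s i)) hq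
          (returnProb_nonneg i)
    _ ≤ ∑ i ∈ range (s + 1), returnProb X i * escapeProb X (s - i) :=
        sum_le_sum_of_subset_of_nonneg (fun i hi => by rw [mem_Icc] at hi; rw [mem_range]; omega)
          fun i _ _ => mul_nonneg (returnProb_nonneg i) (escapeProb_nonneg (s - i))
    _ ≤ 1 := sum_returnProb_mul_escapeProb_le_one s

end RandomWalk

open RandomWalk

instance : Nonempty S11 := ⟨⟨(0, 0), by simp [S11]⟩⟩

def stepS11 (p : ↥S11 × ↥S11) : ℤ × ℤ := p.1 - p.2

lemma card_S11_prod : Fintype.card (↥S11 × ↥S11) = 9 := by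
  rw [Fintype.card_prod, Fintype.card_coe]
  rfl

lemma P11_eq_returnProb (i : ℕ) : P11 i = returnProb stepS11 i := by
  rw [P11, returnProb, card_S11_prod]
  congr

lemma Q11_eq_escapeProb (s : ℕ) : Q11 s = escapeProb stepS11 s := by
  rw [Q11, escapeProb, card_S11_prod]
  congr

theorem stmt11_general (c₁ c₂ : ℝ) (hc₁ : 0 < c₁) :
    ∃ C : ℝ, 0 < C ∧ ∀ s : ℕ, 2 ≤ s →
      (∀ i : ℕ, 1 ≤ i → i ≤ s → c₁ / i ≤ P11 i ∧ P11 i ≤ c₂ / i) →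
      Q11 s ≤ C / Real.log s := by
  refine ⟨c₁⁻¹, inv_pos.2 hc₁, fun s hs hP => ?_⟩
  have hlog : 0 < Real.log s := Real.log_pos (by exact_mod_cast hs)
  have key := mul_escapeProb_mul_log_le_one hc₁.le
    fun i hi his => P11_eq_returnProb i ▸ (hP i hi his).1
  rw [Q11_eq_escapeProb, le_div_iff₀ hlog, ← one_div, le_div_iff₀' hc₁, ← mul_assoc]
  exact key

/-- If `P'(i) = Θ(1/i)` for `1 ≤ i ≤ s`, then `Q'(s) = O(1/log s)`. -/
theorem stmt11 (c₁ c₂ : ℝ) (hc₁ : 0 < c₁) (hc₂ : 0 < c₂) :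
    ∃ C : ℝ, 0 < C ∧ ∀ s : ℕ, 2 ≤ s →
      (∀ i : ℕ, 1 ≤ i → i ≤ s → c₁ / i ≤ P11 i ∧ P11 i ≤ c₂ / i) →
      Q11 s ≤ C / Real.log s :=
  stmt11_general c₁ c₂ hc₁

end
end

section
/- For every integer C ≥ 2 and every C-uniform hypergraph H with at least one edge and maximum degree at most k, there exists a k-regular C-uniform hypergraph H' containing H (as a subhypergraph on a superset of the vertices) whose maximum codegree equals the maximum codegree of H. -/
/-!
Blow `H` up to the grid `V × 𝔽_q × {0, …, C - 1}` for a prime `q ≥ max k C`, with a copy of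
`H` on each block `V × {(x, i)}`. A vertex `(a, x, i)` then misses `k - deg a` edges; they are
supplied by the lines `{(a, r + t i, i) : i < C}` with `r ∈ 𝔽_q` and slope `t < k - deg a`, and
through each vertex of column `a` passes exactly one line of each slope. The copies add no
codegree between blocks. A line stays in one column, while two vertices of one block lie in
different columns, so the lines add no codegree inside a block; and as `t, i < q`, a line is
determined by two of its points, so between blocks the codegree is at most `1`. This is at
most the maximum codegree of `H`, which has an edge of size `C ≥ 2`.
-/

open Finset Function

namespace Multiset

variable {α β : Type*}

lemma countP_map_eq_countP_comp (f : α → β) (s : Multiset α) (p : β → Prop)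
    [DecidablePred p] : (s.map f).countP p = s.countP (p ∘ f) := by
  rw [countP_map, countP_eq_card_filter]
  rfl

lemma countP_finsetSum {ι : Type*} (s : Finset ι) (f : ι → Multiset α) (p : α → Prop)
    [DecidablePred p] : (∑ i ∈ s, f i).countP p = ∑ i ∈ s, (f i).countP p :=
  map_sum (countPAddMonoidHom p) f s

end Multiset

lemma ZMod.eq_of_natCast_eq_of_lt {q a b : ℕ} (ha : a < q) (hb : b < q)
    (h : (a : ZMod q) = b) : a = b := by
  rwa [ZMod.natCast_eq_natCast_iff', Nat.mod_eq_of_lt ha, Nat.mod_eq_of_lt hb] at h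

lemma eq_and_eq_of_add_mul_eq_add_mul {F : Type*} [Field F] {r r' s s' c c' : F} (hc : c ≠ c')
    (h : r + s * c = r' + s' * c) (h' : r + s * c' = r' + s' * c') : r = r' ∧ s = s' := by
  have hs : s = s' := mul_right_cancel₀ (sub_ne_zero.mpr hc) (by linear_combination h - h')
  exact ⟨by rw [hs] at h; exact add_right_cancel h, hs⟩

namespace Hypergraph

variable {α β : Type*}

section Codegree

variable [DecidableEq α]

def degree (E : Multiset (Finset α)) (v : α) : ℕ := E.countP (v ∈ ·)

def codegree (E : Multiset (Finset α)) (v w : α) : ℕ := E.countP fun e => v ∈ e ∧ w ∈ e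

def maxCodegree [Fintype α] (E : Multiset (Finset α)) : ℕ :=
  ({p : α × α | p.1 ≠ p.2} : Finset (α × α)).sup fun p => codegree E p.1 p.2

lemma degree_add (E F : Multiset (Finset α)) (v : α) :
    degree (E + F) v = degree E v + degree F v :=
  Multiset.countP_add _ _ _

lemma codegree_add (E F : Multiset (Finset α)) (v w : α) :
    codegree (E + F) v w = codegree E v w + codegree F v w :=
  Multiset.countP_add _ _ _

variable [Fintype α] {E : Multiset (Finset α)}

lemma codegree_le_maxCodegree {v w : α} (h : v ≠ w) : codegree E v w ≤ maxCodegree E :=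
  le_sup (f := fun p : α × α => codegree E p.1 p.2) (mem_filter.mpr ⟨mem_univ (v, w), h⟩)

lemma maxCodegree_le {m : ℕ} (h : ∀ v w, v ≠ w → codegree E v w ≤ m) : maxCodegree E ≤ m :=
  Finset.sup_le fun p hp => h p.1 p.2 (mem_filter.mp hp).2

lemma one_le_maxCodegree {e : Finset α} (he : e ∈ E) (hcard : 2 ≤ e.card) :
    1 ≤ maxCodegree E := by
  obtain ⟨v, hv, w, hw, hvw⟩ := one_lt_card.mp hcard
  exact (Multiset.countP_pos.mpr ⟨e, he, hv, hw⟩).trans_le (codegree_le_maxCodegree hvw)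

end Codegree

section MapEquiv

variable [DecidableEq α] [DecidableEq β] (σ : α ≃ β) (E : Multiset (Finset α))

lemma degree_map_equiv (u : β) :
    degree (E.map (·.map σ.toEmbedding)) u = degree E (σ.symm u) := by
  simp only [degree, Multiset.countP_map_eq_countP_comp, comp_def, mem_map_equiv]

lemma codegree_map_equiv (u u' : β) :
    codegree (E.map (·.map σ.toEmbedding)) u u' = codegree E (σ.symm u) (σ.symm u') := by
  simp only [codegree, Multiset.countP_map_eq_countP_comp, comp_def, mem_map_equiv]

lemma maxCodegree_map_equiv [Fintype α] [Fintype β] :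
    maxCodegree (E.map (·.map σ.toEmbedding)) = maxCodegree E := by
  refine le_antisymm (maxCodegree_le fun u u' h => ?_) (maxCodegree_le fun v v' h => ?_)
  · rw [codegree_map_equiv]
    exact codegree_le_maxCodegree (σ.symm.injective.ne h)
  · simpa [codegree_map_equiv] using
      codegree_le_maxCodegree (E := E.map (·.map σ.toEmbedding)) (σ.injective.ne h)

end MapEquiv

structure IsRegularExtension [Fintype α] [DecidableEq α] [Fintype β] [DecidableEq β] (C k : ℕ)
    (E : Multiset (Finset α)) (ι : α ↪ β) (E' : Multiset (Finset β)) : Prop where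
  card_eq : ∀ e ∈ E', e.card = C
  degree_eq : ∀ v, degree E' v = k
  map_le : E.map (·.map ι) ≤ E'
  maxCodegree_eq : maxCodegree E' = maxCodegree E

lemma IsRegularExtension.map_equiv {γ : Type*} [Fintype α] [DecidableEq α] [Fintype β]
    [DecidableEq β] [Fintype γ] [DecidableEq γ] {C k : ℕ} {E : Multiset (Finset α)}
    {ι : α ↪ β} {E' : Multiset (Finset β)} (h : IsRegularExtension C k E ι E') (σ : β ≃ γ) :
    IsRegularExtension C k E (ι.trans σ.toEmbedding) (E'.map (·.map σ.toEmbedding)) where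
  card_eq e he := by
    obtain ⟨e, he', rfl⟩ := Multiset.mem_map.mp he
    rw [card_map, h.card_eq e he']
  degree_eq v := by rw [degree_map_equiv, h.degree_eq]
  map_le := by
    simpa [Multiset.map_map, comp_def, map_map] using
      Multiset.map_le_map (f := (·.map σ.toEmbedding)) h.map_le
  maxCodegree_eq := by rw [maxCodegree_map_equiv, h.maxCodegree_eq]

section Copies

lemma mem_map_sectL {s : Finset α} {b : β} {w : α × β} :
    w ∈ s.map (Embedding.sectL α b) ↔ w.1 ∈ s ∧ w.2 = b := by
  obtain ⟨v, c⟩ := w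
  simp [eq_comm]

variable (β) [Fintype β]

def copies (E : Multiset (Finset α)) : Multiset (Finset (α × β)) :=
  ∑ b : β, E.map (·.map (Embedding.sectL α b))

variable {β} (E : Multiset (Finset α))

lemma card_of_mem_copies {C : ℕ} (hE : ∀ e ∈ E, e.card = C) :
    ∀ e ∈ copies β E, e.card = C := by
  simp only [copies, Multiset.mem_sum, Multiset.mem_map]
  rintro _ ⟨b, -, e, he, rfl⟩
  rw [card_map, hE e he]

lemma map_sectL_le_copies (b : β) : E.map (·.map (Embedding.sectL α b)) ≤ copies β E :=
  single_le_sum (f := fun b : β => E.map (·.map (Embedding.sectL α b)))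
    (fun _ _ => Multiset.zero_le _) (mem_univ b)

variable [DecidableEq α] [DecidableEq β]

lemma degree_copies (w : α × β) : degree (copies β E) w = degree E w.1 := by
  simp only [degree, copies, Multiset.countP_finsetSum, Multiset.countP_map_eq_countP_comp,
    comp_def, mem_map_sectL]
  rw [sum_eq_single w.2 (fun b _ hb => Multiset.countP_eq_zero.mpr fun e _ h => hb h.2.symm)
    (by simp)]
  simp

lemma codegree_copies (w w' : α × β) :
    codegree (copies β E) w w' = if w.2 = w'.2 then codegree E w.1 w'.1 else 0 := by
  simp only [codegree, copies, Multiset.countP_finsetSum, Multiset.countP_map_eq_countP_comp,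
    comp_def, mem_map_sectL]
  split_ifs with h
  · rw [sum_eq_single w.2 (fun b _ hb => Multiset.countP_eq_zero.mpr fun e _ h => hb h.1.2.symm)
      (by simp)]
    simp [h]
  · exact sum_eq_zero fun b _ =>
      Multiset.countP_eq_zero.mpr fun e _ he => h (he.1.2.trans he.2.2.symm)

end Copies

section Lines

variable {q C : ℕ}

def line (a : α) (r : ZMod q) (t : ℕ) : Finset (α × ZMod q × Fin C) :=
  univ.map ⟨fun i : Fin C => (a, r + t * ((i : ℕ) : ZMod q), i), fun _ _ h => congrArg (·.2.2) h⟩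

lemma mem_line {a : α} {r : ZMod q} {t : ℕ} {w : α × ZMod q × Fin C} :
    w ∈ line a r t ↔ w.1 = a ∧ w.2.1 = r + t * ((w.2.2 : ℕ) : ZMod q) := by
  obtain ⟨v, x, i⟩ := w
  simp only [line, mem_map, mem_univ, true_and, Prod.ext_iff]
  constructor
  · rintro ⟨j, rfl, rfl, rfl⟩
    exact ⟨rfl, rfl⟩
  · rintro ⟨rfl, rfl⟩
    exact ⟨i, rfl, rfl, rfl⟩

lemma card_line (a : α) (r : ZMod q) (t : ℕ) :
    (line a r t : Finset (α × ZMod q × Fin C)).card = C := by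
  simp [line]

variable [Fintype α] [NeZero q]

variable (q C) in
def lines (d : α → ℕ) : Multiset (Finset (α × ZMod q × Fin C)) :=
  ∑ a, ((univ : Finset (ZMod q)) ×ˢ range (d a)).val.map fun x => line a x.1 x.2

lemma exists_eq_line_of_mem_lines {d : α → ℕ} {e : Finset (α × ZMod q × Fin C)}
    (he : e ∈ lines q C d) : ∃ a r t, e = line a r t := by
  simp only [lines, Multiset.mem_sum, Multiset.mem_map] at he
  obtain ⟨a, -, x, -, rfl⟩ := he
  exact ⟨a, x.1, x.2, rfl⟩

lemma card_of_mem_lines (d : α → ℕ) : ∀ e ∈ lines q C d, e.card = C := by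
  intro e he
  obtain ⟨a, r, t, rfl⟩ := exists_eq_line_of_mem_lines he
  exact card_line a r t

variable [DecidableEq α]

lemma degree_lines (d : α → ℕ) (w : α × ZMod q × Fin C) : degree (lines q C d) w = d w.1 := by
  simp only [degree, lines, Multiset.countP_finsetSum, Multiset.countP_map_eq_countP_comp,
    comp_def, mem_line]
  rw [sum_eq_single w.1 (fun a _ ha => Multiset.countP_eq_zero.mpr fun x _ hx => ha hx.1.symm)
    (by simp), Multiset.countP_eq_card_filter, ← filter_val, card_val, card_filter,
    sum_product_right]
  have hrow : ∀ c : ZMod q, ∑ r : ZMod q, (if w.2.1 = r + c then 1 else 0) = 1 := fun c => by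
    simp_rw [eq_comm (a := w.2.1), ← eq_sub_iff_add_eq]
    simp
  simp only [true_and, hrow, sum_const, card_range, smul_eq_mul, mul_one]

lemma codegree_lines_eq_zero (d : α → ℕ) {w w' : α × ZMod q × Fin C} (hne : w ≠ w')
    (h : w.2 = w'.2) : codegree (lines q C d) w w' = 0 := by
  refine Multiset.countP_eq_zero.mpr fun e he hww' => hne (Prod.ext ?_ h)
  obtain ⟨a, r, t, rfl⟩ := exists_eq_line_of_mem_lines he
  exact (mem_line.mp hww'.1).1.trans (mem_line.mp hww'.2).1.symm

lemma codegree_lines_le_one [Fact q.Prime] {d : α → ℕ} (hd : ∀ a, d a ≤ q) (hC : C ≤ q)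
    {w w' : α × ZMod q × Fin C} (hne : w ≠ w') : codegree (lines q C d) w w' ≤ 1 := by
  simp only [codegree, lines, Multiset.countP_finsetSum, Multiset.countP_map_eq_countP_comp,
    comp_def]
  rw [sum_eq_single w.1 (fun a _ ha => Multiset.countP_eq_zero.mpr fun x _ hx =>
      ha (mem_line.mp hx.1).1.symm) (by simp), Multiset.countP_eq_card_filter, ← filter_val,
    card_val, card_le_one]
  rintro ⟨r, t⟩ hx ⟨r', t'⟩ hx'
  simp only [mem_filter, mem_product, mem_univ, true_and, mem_range, mem_line] at hx hx'
  obtain ⟨ht, hw, hcol, hw'⟩ := hx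
  obtain ⟨ht', hv, -, hv'⟩ := hx'
  have hlayer : ((w.2.2 : ℕ) : ZMod q) ≠ ((w'.2.2 : ℕ) : ZMod q) := by
    intro hi
    have hi : w.2.2 = w'.2.2 :=
      Fin.ext (ZMod.eq_of_natCast_eq_of_lt (w.2.2.2.trans_le hC) (w'.2.2.2.trans_le hC) hi)
    exact hne (Prod.ext hcol.symm (Prod.ext (by rw [hw, hw', hi]) hi))
  obtain ⟨hr, htt'⟩ := eq_and_eq_of_add_mul_eq_add_mul hlayer (hw.symm.trans hv)
    (hw'.symm.trans hv')
  rw [hr, ZMod.eq_of_natCast_eq_of_lt (ht.trans_le (hd _)) (ht'.trans_le (hd _)) htt']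

end Lines

section Regularization

variable [Fintype α] [DecidableEq α] (q C k : ℕ) [NeZero q]

def regularization (E : Multiset (Finset α)) : Multiset (Finset (α × ZMod q × Fin C)) :=
  copies (ZMod q × Fin C) E + lines q C fun a => k - degree E a

variable {q C k} [Fact q.Prime] {E : Multiset (Finset α)}

lemma codegree_regularization_le (hkq : k ≤ q) (hCq : C ≤ q) (h1 : 1 ≤ maxCodegree E)
    {w w' : α × ZMod q × Fin C} (hne : w ≠ w') :
    codegree (regularization q C k E) w w' ≤ maxCodegree E := by
  rw [regularization, codegree_add, codegree_copies]
  by_cases h : w.2 = w'.2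
  · rw [if_pos h, codegree_lines_eq_zero _ hne h, add_zero]
    exact codegree_le_maxCodegree fun h1 => hne (Prod.ext h1 h)
  · rw [if_neg h, zero_add]
    exact (codegree_lines_le_one (fun a => (Nat.sub_le _ _).trans hkq) hCq hne).trans h1

theorem isRegularExtension_regularization (hkq : k ≤ q) (hCq : C ≤ q) (hC : 2 ≤ C)
    (hE : E ≠ 0) (huniform : ∀ e ∈ E, e.card = C) (hdeg : ∀ v, degree E v ≤ k)
    (b : ZMod q × Fin C) :
    IsRegularExtension C k E (Embedding.sectL α b) (regularization q C k E) where
  card_eq e he :=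
    (Multiset.mem_add.mp he).elim (card_of_mem_copies E huniform e) (card_of_mem_lines _ e)
  degree_eq w := by
    rw [regularization, degree_add, degree_copies, degree_lines, Nat.add_sub_cancel' (hdeg _)]
  map_le := (map_sectL_le_copies E b).trans (Multiset.le_add_right _ _)
  maxCodegree_eq := by
    obtain ⟨e, he⟩ := Multiset.exists_mem_of_ne_zero hE
    refine le_antisymm (maxCodegree_le fun w w' hne => codegree_regularization_le hkq hCq
      (one_le_maxCodegree he (huniform e he ▸ hC)) hne) (maxCodegree_le fun v v' hne => ?_)
    calc codegree E v v' = codegree (copies (ZMod q × Fin C) E) (v, b) (v', b) := by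
          rw [codegree_copies, if_pos rfl]
      _ ≤ codegree (regularization q C k E) (v, b) (v', b) := by
          rw [regularization, codegree_add]
          exact Nat.le_add_right _ _
      _ ≤ maxCodegree (regularization q C k E) :=
          codegree_le_maxCodegree fun h => hne (congrArg Prod.fst h)

end Regularization

end Hypergraph

theorem stmt13_general (C k : ℕ) (hC : 2 ≤ C)
    (V : Type) [Fintype V] [DecidableEq V] (E : Multiset (Finset V))
    (hE : E ≠ 0) (huniform : ∀ e ∈ E, e.card = C)
    (hdeg : ∀ v : V, E.countP (fun e => v ∈ e) ≤ k) :
    ∃ (N : ℕ) (ι : V ↪ Fin N) (E' : Multiset (Finset (Fin N))),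
      (∀ e ∈ E', e.card = C) ∧
      (∀ v : Fin N, E'.countP (fun e => v ∈ e) = k) ∧
      E.map (fun e => e.image ι) ≤ E' ∧
      (Finset.univ.filter (fun p : Fin N × Fin N => p.1 ≠ p.2)).sup
          (fun p => E'.countP (fun e => p.1 ∈ e ∧ p.2 ∈ e))
        = (Finset.univ.filter (fun p : V × V => p.1 ≠ p.2)).sup
            (fun p => E.countP (fun e => p.1 ∈ e ∧ p.2 ∈ e)) := by
  obtain ⟨q, hq, hq_prime⟩ := Nat.exists_infinite_primes (max k C)
  have : Fact q.Prime := ⟨hq_prime⟩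
  have hreg := (Hypergraph.isRegularExtension_regularization (le_of_max_le_left hq)
    (le_of_max_le_right hq) hC hE huniform hdeg (0, ⟨0, by omega⟩)).map_equiv
    (Fintype.equivFin _)
  exact ⟨_, _, _, hreg.card_eq, hreg.degree_eq,
    by simpa only [Finset.map_eq_image] using hreg.map_le, hreg.maxCodegree_eq⟩

/-- Hypergraph regularization: for every `C ≥ 2` and every `C`-uniform hypergraph `H`
(with a multiset of edges) having at least one edge and maximum degree at most `k`,
there is a `k`-regular `C`-uniform hypergraph `H'` containing `H` (via an embedding of
the vertices, the image of the edge multiset of `H` being contained in that of `H'`)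
whose maximum codegree equals the maximum codegree of `H`. -/
theorem stmt13 (C k : ℕ) (hC : 2 ≤ C) (hk : 0 < k)
    (V : Type) [Fintype V] [DecidableEq V] (E : Multiset (Finset V))
    (hE : E ≠ 0) (huniform : ∀ e ∈ E, e.card = C)
    (hdeg : ∀ v : V, E.countP (fun e => v ∈ e) ≤ k) :
    ∃ (N : ℕ) (ι : V ↪ Fin N) (E' : Multiset (Finset (Fin N))),
      (∀ e ∈ E', e.card = C) ∧
      (∀ v : Fin N, E'.countP (fun e => v ∈ e) = k) ∧
      E.map (fun e => e.image ι) ≤ E' ∧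
      (Finset.univ.filter (fun p : Fin N × Fin N => p.1 ≠ p.2)).sup
          (fun p => E'.countP (fun e => p.1 ∈ e ∧ p.2 ∈ e))
        = (Finset.univ.filter (fun p : V × V => p.1 ≠ p.2)).sup
            (fun p => E.countP (fun e => p.1 ∈ e ∧ p.2 ∈ e)) :=
  stmt13_general C k hC V E hE huniform hdeg
end

section
/- If a sequence f : ℕ → ℝ with 0 ≤ f(t) ≤ t satisfies f(t+1) ≤ f(t) + 1/2 - f(t)/(2(2t+1)) + 1/(2t+2) for all t ≥ 1, then limsup_{t→∞} f(t)/t ≤ 2/5. -/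
open Filter Real

private lemma stmt19_key (f : ℕ → ℝ) (h0 : ∀ t : ℕ, 0 ≤ f t ∧ f t ≤ (t : ℝ))
    (hrec : ∀ t : ℕ, 1 ≤ t →
      f (t + 1) ≤ f t + 1 / 2 - f t / (2 * (2 * (t : ℝ) + 1)) + 1 / (2 * (t : ℝ) + 2)) :
    ∀ t : ℕ, 1 ≤ t → f t ≤ 2 / 5 * t + 9 * Real.log (t + 1) := by
  intro t ht
  induction t with
  | zero => omega
  | succ n ih =>
    rcases Nat.eq_or_lt_of_le ht with h1 | h1
    · -- base case t = 1
      have h2 : f 1 ≤ 1 := by simpa using (h0 1).2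
      have hlog : (0.6931471803 : ℝ) < Real.log 2 := Real.log_two_gt_d9
      have : Real.log (((1:ℕ):ℝ) + 1) = Real.log 2 := by norm_num
      simp only [← h1]
      push_cast
      nlinarith [hlog, h2]
    · -- inductive step, n ≥ 1
      have hn : 1 ≤ n := by omega
      have ihn := ih hn
      have hrecn := hrec n hn
      have hnR : (1:ℝ) ≤ (n:ℝ) := by exact_mod_cast hn
      have hpos : (0:ℝ) < 2 * (2 * (n:ℝ) + 1) := by linarith
      have hpos2 : (0:ℝ) < 2 * (n:ℝ) + 2 := by linarith
      have hlog : (0.6931471803 : ℝ) < Real.log 2 := Real.log_two_gt_d9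
      have hlogmono : Real.log ((n:ℝ) + 1) ≤ Real.log ((n:ℝ) + 1 + 1) :=
        Real.log_le_log (by linarith) (by linarith)
      have hlog2 : Real.log 2 ≤ Real.log ((n:ℝ) + 1) :=
        Real.log_le_log (by norm_num) (by linarith)
      -- f(n+1) ≤ f n * (1 - 1/(4n+2)) + 1/2 + 1/(2n+2)
      have hfactor : (0:ℝ) < 1 - 1 / (2 * (2 * (n:ℝ) + 1)) := by
        rw [sub_pos, div_lt_one hpos]; linarith
      have hmul : f n * (1 - 1 / (2 * (2 * (n:ℝ) + 1))) ≤
          (2 / 5 * n + 9 * Real.log ((n:ℝ) + 1)) * (1 - 1 / (2 * (2 * (n:ℝ) + 1))) :=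
        mul_le_mul_of_nonneg_right ihn (le_of_lt hfactor)
      have hstep : f (n + 1) ≤
          (2 / 5 * n + 9 * Real.log ((n:ℝ) + 1)) * (1 - 1 / (2 * (2 * (n:ℝ) + 1)))
          + 1 / 2 + 1 / (2 * (n:ℝ) + 2) := by
        have : f n + 1 / 2 - f n / (2 * (2 * (n:ℝ) + 1)) + 1 / (2 * (n:ℝ) + 2)
            = f n * (1 - 1 / (2 * (2 * (n:ℝ) + 1))) + 1 / 2 + 1 / (2 * (n:ℝ) + 2) := by
          field_simp; ring
        linarith [hrecn, hmul, this ▸ hrecn]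
      -- now show RHS ≤ 2/5 (n+1) + 9 log(n+2)
      have hgoal : (2 / 5 * n + 9 * Real.log ((n:ℝ) + 1)) * (1 - 1 / (2 * (2 * (n:ℝ) + 1)))
          + 1 / 2 + 1 / (2 * (n:ℝ) + 2) ≤ 2 / 5 * ((n:ℝ) + 1) + 9 * Real.log ((n:ℝ) + 1 + 1) := by
        have key : (2 / 5 * n + 9 * Real.log ((n:ℝ) + 1)) * (1 / (2 * (2 * (n:ℝ) + 1)))
            ≥ 1 / 10 + 1 / (2 * (n:ℝ) + 2) := by
          have e1 : (2:ℝ) / 5 * n * (1 / (2 * (2 * (n:ℝ) + 1)))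
              = 1 / 10 - 1 / (10 * (2 * (n:ℝ) + 1)) := by field_simp; ring
          have e2 : 6 / (2 * (2 * (n:ℝ) + 1)) ≤
              9 * Real.log ((n:ℝ) + 1) * (1 / (2 * (2 * (n:ℝ) + 1))) := by
            rw [mul_one_div, div_le_div_iff_of_pos_right hpos]
            nlinarith
          have e3a : 1 / (10 * (2 * (n:ℝ) + 1)) ≤ 1 / (2 * (n:ℝ) + 1) :=
            one_div_le_one_div_of_le (by linarith) (by linarith)
          have e3b : 1 / (2 * (n:ℝ) + 2) ≤ 1 / (2 * (n:ℝ) + 1) :=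
            one_div_le_one_div_of_le (by linarith) (by linarith)
          have e3c : 6 / (2 * (2 * (n:ℝ) + 1)) = 3 / (2 * (n:ℝ) + 1) := by
            rw [div_eq_div_iff hpos.ne' (by positivity)]; ring
          have e3d : 1 / (2 * (n:ℝ) + 1) ≤ 3 / (2 * (n:ℝ) + 1) := by
            apply div_le_div_of_nonneg_right ?_ (by linarith) <;> norm_num
          have e3e : (0:ℝ) ≤ 1 / (2 * (n:ℝ) + 1) := by positivity
          have esplit : (2 / 5 * (n:ℝ) + 9 * Real.log ((n:ℝ) + 1)) * (1 / (2 * (2 * (n:ℝ) + 1)))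
              = 2 / 5 * (n:ℝ) * (1 / (2 * (2 * (n:ℝ) + 1)))
                + 9 * Real.log ((n:ℝ) + 1) * (1 / (2 * (2 * (n:ℝ) + 1))) := by ring
          have e3f : 3 / (2 * (n:ℝ) + 1) = 3 * (1 / (2 * (n:ℝ) + 1)) := by ring
          rw [e3c] at e2
          linarith [e1, e2, e3a, e3b, e3e, e3f, esplit]
        have expand : (2 / 5 * (n:ℝ) + 9 * Real.log ((n:ℝ) + 1)) * (1 - 1 / (2 * (2 * (n:ℝ) + 1)))
            = (2 / 5 * (n:ℝ) + 9 * Real.log ((n:ℝ) + 1))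
              - (2 / 5 * (n:ℝ) + 9 * Real.log ((n:ℝ) + 1)) * (1 / (2 * (2 * (n:ℝ) + 1))) := by
          ring
        rw [expand]
        linarith [key, hlogmono]
      have hfin := le_trans hstep hgoal
      push_cast
      push_cast at hfin
      linarith

/-- If `0 ≤ f(t) ≤ t` and `f(t+1) ≤ f(t) + 1/2 - f(t)/(2(2t+1)) + 1/(2t+2)` for all
`t ≥ 1`, then `limsup f(t)/t ≤ 2/5`. -/
theorem stmt19 (f : ℕ → ℝ) (h0 : ∀ t : ℕ, 0 ≤ f t ∧ f t ≤ (t : ℝ))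
    (hrec : ∀ t : ℕ, 1 ≤ t →
      f (t + 1) ≤ f t + 1 / 2 - f t / (2 * (2 * (t : ℝ) + 1)) + 1 / (2 * (t : ℝ) + 2)) :
    Filter.limsup (fun t : ℕ => f t / (t : ℝ)) Filter.atTop ≤ 2 / 5 := by
  have key := stmt19_key f h0 hrec
  -- log(t+1)/t → 0
  have hlog0 : Tendsto (fun t : ℕ => Real.log ((t:ℝ) + 1) / (t:ℝ)) atTop (nhds 0) := by
    have h1 : (fun t : ℕ => Real.log ((t:ℝ) + 1)) =o[atTop] (fun t : ℕ => (t:ℝ) + 1) :=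
      Real.isLittleO_log_id_atTop.comp_tendsto
        (tendsto_atTop_add_const_right _ 1 tendsto_natCast_atTop_atTop)
    have h2 : (fun t : ℕ => (t:ℝ) + 1) =O[atTop] (fun t : ℕ => (t:ℝ)) := by
      rw [Asymptotics.isBigO_iff]
      refine ⟨2, ?_⟩
      filter_upwards [eventually_ge_atTop 1] with t ht
      have h1 : (1:ℝ) ≤ (t:ℝ) := by exact_mod_cast ht
      simp only [Real.norm_eq_abs]
      rw [abs_of_nonneg (by linarith), abs_of_nonneg (by linarith)]
      linarith
    exact (h1.trans_isBigO h2).tendsto_div_nhds_zero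
  have hlim : Tendsto (fun t : ℕ => 2/5 + 9 * (Real.log ((t:ℝ) + 1) / (t:ℝ))) atTop
      (nhds (2/5)) := by
    have := (hlog0.const_mul (9:ℝ)).const_add (2/5 : ℝ)
    simpa using this
  have hev : (fun t : ℕ => f t / (t : ℝ)) ≤ᶠ[atTop]
      (fun t : ℕ => 2/5 + 9 * (Real.log ((t:ℝ) + 1) / (t:ℝ))) := by
    filter_upwards [eventually_ge_atTop 1] with t ht
    have htR : (1:ℝ) ≤ (t:ℝ) := by exact_mod_cast ht
    have htpos : (0:ℝ) < (t:ℝ) := by linarith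
    have hk := key t ht
    rw [div_le_iff₀ htpos]
    calc f t ≤ 2/5 * (t:ℝ) + 9 * Real.log ((t:ℝ)+1) := hk
      _ = (2/5 + 9 * (Real.log ((t:ℝ) + 1) / (t:ℝ))) * (t:ℝ) := by field_simp
  calc Filter.limsup (fun t : ℕ => f t / (t : ℝ)) Filter.atTop
      ≤ Filter.limsup (fun t : ℕ => 2/5 + 9 * (Real.log ((t:ℝ) + 1) / (t:ℝ))) atTop := by
        refine Filter.limsup_le_limsup hev ?_ ?_
        · apply Filter.isCoboundedUnder_le_of_eventually_le atTop (x := 0)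
          filter_upwards [eventually_ge_atTop 1] with t ht
          have htpos : (0:ℝ) < (t:ℝ) := by exact_mod_cast Nat.lt_of_lt_of_le Nat.zero_lt_one ht
          exact div_nonneg (h0 t).1 (le_of_lt htpos)
        · exact hlim.isBoundedUnder_le
    _ = 2/5 := hlim.limsup_eq
end
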